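/- arXiv:1612.07912 — 5 statements merged into one kernel-verified Lean document; each statement's English description precedes it below -/
import Mathlib

section
/- If an arc (n,p,r,n') of a negotiation N1 does not occur in any initial occurrence sequence, belongs to a hyperarc with more than one arc (i.e., X(n,p,r) has at least two elements), and the structure N2 obtained by removing n' from X(n,p,r) is again a negotiation, then N1 and N2 have exactly the same set of initial occurrence sequences. -/
universe u v w

/-- A (distributed) negotiation over a finite set of agents, a type of atoms and a type
of result names.  `atoms` is the finite set of negotiation atoms, `n0`/`nf` the initial
and final atoms, `parties n` the parties of atom `n`, `results n` its finite set of
results, and `trans n p r` the set of atoms agent `p` is ready to engage in after the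
outcome `(n, r)`. -/
structure Negotiation (Agent : Type u) (Atom : Type v) (Res : Type w)
    [Fintype Agent] [DecidableEq Agent] [DecidableEq Atom] [DecidableEq Res] where
  atoms : Finset Atom
  n0 : Atom
  nf : Atom
  parties : Atom → Finset Agent
  results : Atom → Finset Res
  trans : Atom → Agent → Res → Finset Atom
  n0_mem : n0 ∈ atoms
  nf_mem : nf ∈ atoms
  parties_nonempty : ∀ n ∈ atoms, (parties n).Nonempty
  results_nonempty : ∀ n ∈ atoms, (results n).Nonempty
  parties_n0 : parties n0 = Finset.univ
  parties_nf : parties nf = Finset.univ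
  trans_sub : ∀ n ∈ atoms, ∀ p ∈ parties n, ∀ r ∈ results n, trans n p r ⊆ atoms
  trans_parties : ∀ n ∈ atoms, ∀ p ∈ parties n, ∀ r ∈ results n, ∀ n' ∈ trans n p r, p ∈ parties n'
  trans_empty_iff : ∀ n ∈ atoms, ∀ p ∈ parties n, ∀ r ∈ results n, (trans n p r = ∅ ↔ n = nf)
  on_path : ∀ n ∈ atoms,
    Relation.ReflTransGen (fun a b => ∃ p ∈ parties a, ∃ r ∈ results a, b ∈ trans a p r) n0 n ∧
    Relation.ReflTransGen (fun a b => ∃ p ∈ parties a, ∃ r ∈ results a, b ∈ trans a p r) n nf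

namespace Negotiation

variable {Agent : Type u} {Atom : Type v} {Res : Type w}
variable [Fintype Agent] [DecidableEq Agent] [DecidableEq Atom] [DecidableEq Res]

/-- A marking assigns to each agent the set of atoms it is ready to engage in. -/
def Marking (Agent : Type u) (Atom : Type v) : Type (max u v) := Agent → Finset Atom

/-- A marking enables an atom if every party of the atom is ready to engage in it. -/
def Enables (N : Negotiation Agent Atom Res) (x : Marking Agent Atom) (n : Atom) : Prop :=
  n ∈ N.atoms ∧ ∀ p ∈ N.parties n, n ∈ x p

/-- Small step: the occurrence of the outcome `o = (n, r)` from marking `x` yields `y`. -/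
def StepTo (N : Negotiation Agent Atom Res) (x : Marking Agent Atom) (o : Atom × Res)
    (y : Marking Agent Atom) : Prop :=
  N.Enables x o.1 ∧ o.2 ∈ N.results o.1 ∧
    ∀ p, y p = if p ∈ N.parties o.1 then N.trans o.1 p o.2 else x p

/-- Occurrence sequences: `Seq N x σ y` means the finite sequence of outcomes `σ`
can occur from marking `x` and leads to marking `y`. -/
inductive Seq (N : Negotiation Agent Atom Res) :
    Marking Agent Atom → List (Atom × Res) → Marking Agent Atom → Prop
  | nil (x : Marking Agent Atom) : Seq N x [] x
  | cons {x y z : Marking Agent Atom} {o : Atom × Res} {σ : List (Atom × Res)} :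
      N.StepTo x o y → Seq N y σ z → Seq N x (o :: σ) z

/-- The initial marking. -/
def x0 (N : Negotiation Agent Atom Res) : Marking Agent Atom := fun _ => {N.n0}

/-- The final marking. -/
def xf (_N : Negotiation Agent Atom Res) : Marking Agent Atom := fun _ => ∅

/-- A marking is reachable if some occurrence sequence leads to it from the initial marking. -/
def Reachable (N : Negotiation Agent Atom Res) (x : Marking Agent Atom) : Prop :=
  ∃ σ, N.Seq N.x0 σ x

/-- A large step is an occurrence sequence from the initial to the final marking. -/
def LargeStep (N : Negotiation Agent Atom Res) (σ : List (Atom × Res)) : Prop :=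
  N.Seq N.x0 σ N.xf

/-- Soundness: every atom is enabled at some reachable marking, and from every
reachable marking the final marking is reachable. -/
def Sound (N : Negotiation Agent Atom Res) : Prop :=
  (∀ n ∈ N.atoms, ∃ x, N.Reachable x ∧ N.Enables x n) ∧
  (∀ x, N.Reachable x → ∃ τ, N.Seq x τ N.xf)

/-- An agent is deterministic if it is never ready to engage in more than one atom. -/
def DeterministicAgent (N : Negotiation Agent Atom Res) (p : Agent) : Prop :=
  ∀ n ∈ N.atoms, n ≠ N.nf → p ∈ N.parties n → ∀ r ∈ N.results n, ∃ n', N.trans n p r = {n'}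

/-- A negotiation is deterministic if all its agents are. -/
def Deterministic (N : Negotiation Agent Atom Res) : Prop := ∀ p, N.DeterministicAgent p

/-- Weak determinism: for every `(n, p, r)` there is a deterministic agent which is a
party of every atom in `trans n p r`. -/
def WeaklyDeterministic (N : Negotiation Agent Atom Res) : Prop :=
  ∀ n ∈ N.atoms, ∀ p ∈ N.parties n, ∀ r ∈ N.results n,
    ∃ b, N.DeterministicAgent b ∧ ∀ n' ∈ N.trans n p r, b ∈ N.parties n'

/-- The edge relation of the graph of a negotiation. -/
def Edge (N : Negotiation Agent Atom Res) (a b : Atom) : Prop :=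
  a ∈ N.atoms ∧ b ∈ N.atoms ∧ ∃ p ∈ N.parties a, ∃ r ∈ N.results a, b ∈ N.trans a p r

/-- A negotiation is acyclic if its graph has no cycles. -/
def Acyclic (N : Negotiation Agent Atom Res) : Prop :=
  ∀ n, ¬ Relation.TransGen N.Edge n n

/-- The arc `(n, p, r, n')` occurs in the occurrence sequence `σ`. -/
def ArcOccursIn (N : Negotiation Agent Atom Res) (n : Atom) (p : Agent) (r : Res) (n' : Atom)
    (σ : List (Atom × Res)) : Prop :=
  ∃ (σ1 σ2 σ3 : List (Atom × Res)) (r' : Res), r' ∈ N.results n' ∧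
    σ = σ1 ++ (n, r) :: σ2 ++ (n', r') :: σ3 ∧ ∀ o ∈ σ2, p ∉ N.parties o.1

/-- The outcome `(n, r)` unconditionally enables the atom `n'`. -/
def UncondEnables (N : Negotiation Agent Atom Res) (n : Atom) (r : Res) (n' : Atom) : Prop :=
  N.parties n' ⊆ N.parties n ∧ ∀ p ∈ N.parties n', N.trans n p r = {n'}

/-- The outcome `(n, r)` has exclusive access to the atom `n'`. -/
def ExclusiveAccess (N : Negotiation Agent Atom Res) (n : Atom) (r : Res) (n' : Atom) : Prop :=
  ∀ p ∈ N.parties n', n' ∈ N.trans n p r ∧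
    ∀ m ∈ N.atoms, ∀ r'' ∈ N.results m, (m, r'') ≠ (n, r) → n' ∉ N.trans m p r''

/-- The outcome `(m, r'')` commits to the atom `n'`. -/
def CommitsTo (N : Negotiation Agent Atom Res) (m : Atom) (r'' : Res) (n' : Atom) : Prop :=
  ∃ p ∈ N.parties m, N.trans m p r'' = {n'}

/-- The merge rule: two results of a non-final atom with identical transition functions
are merged into a fresh result. -/
def MergeRule (N1 N2 : Negotiation Agent Atom Res) : Prop :=
  ∃ (n : Atom) (r1 r2 r : Res), n ∈ N1.atoms ∧ n ≠ N1.nf ∧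
    r1 ∈ N1.results n ∧ r2 ∈ N1.results n ∧ r1 ≠ r2 ∧
    (∀ p ∈ N1.parties n, N1.trans n p r1 = N1.trans n p r2) ∧
    r ∉ N1.results n ∧
    N2.atoms = N1.atoms ∧ N2.n0 = N1.n0 ∧ N2.nf = N1.nf ∧ N2.parties = N1.parties ∧
    N2.results n = insert r (((N1.results n).erase r1).erase r2) ∧
    (∀ m, m ≠ n → N2.results m = N1.results m) ∧
    (∀ p, N2.trans n p r = N1.trans n p r1) ∧
    (∀ p, ∀ r'' ∈ ((N1.results n).erase r1).erase r2, N2.trans n p r'' = N1.trans n p r'') ∧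
    (∀ m, m ≠ n → N2.trans m = N1.trans m)

/-- The iteration rule: a result after which all parties return to the same atom is removed. -/
def IterationRule (N1 N2 : Negotiation Agent Atom Res) : Prop :=
  ∃ (n : Atom) (r : Res), n ∈ N1.atoms ∧ r ∈ N1.results n ∧
    (∀ p ∈ N1.parties n, N1.trans n p r = {n}) ∧
    N2.atoms = N1.atoms ∧ N2.n0 = N1.n0 ∧ N2.nf = N1.nf ∧ N2.parties = N1.parties ∧
    N2.results n = (N1.results n).erase r ∧
    (∀ m, m ≠ n → N2.results m = N1.results m) ∧
    N2.trans = N1.trans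

/-- The useless arc rule: under the guard consisting of three distinct arcs
`(n,p,r,n')`, `(n,p,r,n'')`, `(n,q,r,n')` with `trans n q r = {n'}`, the arc
`(n,p,r,n'')` is removed (and the result is again a negotiation, since `N2` is one). -/
def UselessArcRule (N1 N2 : Negotiation Agent Atom Res) : Prop :=
  ∃ (n : Atom) (p q : Agent) (r : Res) (n' n'' : Atom),
    n ∈ N1.atoms ∧ p ∈ N1.parties n ∧ q ∈ N1.parties n ∧ r ∈ N1.results n ∧
    p ≠ q ∧ n' ≠ n'' ∧
    n' ∈ N1.trans n p r ∧ n'' ∈ N1.trans n p r ∧ N1.trans n q r = {n'} ∧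
    N2.atoms = N1.atoms ∧ N2.n0 = N1.n0 ∧ N2.nf = N1.nf ∧
    N2.parties = N1.parties ∧ N2.results = N1.results ∧
    N2.trans n p r = (N1.trans n p r).erase n'' ∧
    (∀ (m : Atom) (p' : Agent) (r' : Res), (m, p', r') ≠ (n, p, r) →
      N2.trans m p' r' = N1.trans m p' r')

/-- The shortcut rule applied to the outcome `(n, r)` which unconditionally enables `n'`,
using `f` to produce the fresh result names `r'_s = f r'`. -/
def ShortcutRuleAt (N1 N2 : Negotiation Agent Atom Res) (n : Atom) (r : Res) (n' : Atom)
    (f : Res → Res) : Prop :=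
  n ∈ N1.atoms ∧ n' ∈ N1.atoms ∧ r ∈ N1.results n ∧ n' ≠ n ∧
  N1.UncondEnables n r n' ∧
  ((n' ≠ N1.nf ∧ N1.ExclusiveAccess n r n') ∨
   (n' ≠ N1.nf ∧ ∃ (m : Atom) (r'' : Res), m ∈ N1.atoms ∧ r'' ∈ N1.results m ∧
      (m, r'') ≠ (n, r) ∧ N1.CommitsTo m r'' n') ∨
   (n' = N1.nf ∧ N1.ExclusiveAccess n r n' ∧ N1.results n = {r})) ∧
  Set.InjOn f ↑(N1.results n') ∧ (∀ r' ∈ N1.results n', f r' ∉ N1.results n) ∧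
  N2.n0 = N1.n0 ∧ N2.parties = N1.parties ∧
  N2.results n = ((N1.results n).erase r) ∪ (N1.results n').image f ∧
  (∀ m, m ≠ n → N2.results m = N1.results m) ∧
  (∀ r' ∈ N1.results n', ∀ p ∈ N1.parties n', N2.trans n p (f r') = N1.trans n' p r') ∧
  (∀ r' ∈ N1.results n', ∀ p ∈ N1.parties n, p ∉ N1.parties n' →
      N2.trans n p (f r') = N1.trans n p r) ∧
  (∀ r'' ∈ (N1.results n).erase r, ∀ p, N2.trans n p r'' = N1.trans n p r'') ∧
  (∀ m, m ≠ n → N2.trans m = N1.trans m) ∧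
  (N1.ExclusiveAccess n r n' → N2.atoms = N1.atoms.erase n') ∧
  (¬ N1.ExclusiveAccess n r n' → N2.atoms = N1.atoms) ∧
  ((n' = N1.nf ∧ N1.ExclusiveAccess n r n') → N2.nf = n) ∧
  (¬ (n' = N1.nf ∧ N1.ExclusiveAccess n r n') → N2.nf = N1.nf)

/-- The shortcut rule as a relation between negotiations. -/
def ShortcutRule (N1 N2 : Negotiation Agent Atom Res) : Prop :=
  ∃ n r n' f, ShortcutRuleAt N1 N2 n r n' f

/-- The deterministic shortcut rule: the shortcut rule restricted to the case where the
unconditionally enabled atom has at most one result. -/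
def DShortcutRule (N1 N2 : Negotiation Agent Atom Res) : Prop :=
  ∃ n r n' f, ShortcutRuleAt N1 N2 n r n' f ∧ (N1.results n').card ≤ 1

/-- A negotiation is irreducible if none of the four reduction rules is applicable. -/
def Irreducible (N : Negotiation Agent Atom Res) : Prop :=
  ∀ N' : Negotiation Agent Atom Res,
    ¬ (MergeRule N N' ∨ IterationRule N N' ∨ UselessArcRule N N' ∨ ShortcutRule N N')

/-- The marking `x_n` that puts exactly the parties of `n` on `n`. -/
def xAt (N : Negotiation Agent Atom Res) (n : Atom) : Marking Agent Atom :=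
  fun p => if p ∈ N.parties n then {n} else ∅

/-- An `(n, r)`-sequence: a finite occurrence sequence from `x_n` starting with the
outcome `(n, r)` all of whose atoms have their parties included in the parties of `n`. -/
def NRSeq (N : Negotiation Agent Atom Res) (n : Atom) (r : Res)
    (σ : List (Atom × Res)) : Prop :=
  (∃ τ, σ = (n, r) :: τ) ∧ (∃ y, N.Seq (N.xAt n) σ y) ∧
    ∀ o ∈ σ, N.parties o.1 ⊆ N.parties n

/-- The index of the outcome `(n, r)`: the length of a longest (maximal) `(n,r)`-sequence
minus one. -/
noncomputable def outcomeIndex (N : Negotiation Agent Atom Res) (n : Atom) (r : Res) : ℕ :=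
  sSup {l : ℕ | ∃ σ, N.NRSeq n r σ ∧ σ.length = l} - 1

/-- The index of a negotiation: the sum of the indices of all non-final outcomes. -/
noncomputable def negIndex (N : Negotiation Agent Atom Res) : ℕ :=
  (N.atoms.filter (fun n => n ≠ N.nf)).sum
    (fun n => (N.results n).sum (fun r => N.outcomeIndex n r))

/-- An `n`-sequence: an `(n, r)`-sequence for some result `r` of `n`. -/
def NSeq (N : Negotiation Agent Atom Res) (n : Atom) (σ : List (Atom × Res)) : Prop :=
  (∃ r ∈ N.results n, ∃ τ, σ = (n, r) :: τ) ∧ (∃ y, N.Seq (N.xAt n) σ y) ∧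
    ∀ o ∈ σ, N.parties o.1 ⊆ N.parties n

/-- A maximal `n`-sequence: it cannot be extended to a longer `n`-sequence. -/
def MaximalNSeq (N : Negotiation Agent Atom Res) (n : Atom) (σ : List (Atom × Res)) : Prop :=
  N.NSeq n σ ∧ ∀ o : Atom × Res, ¬ N.NSeq n (σ ++ [o])

/-- An outcome `(n, r)` is uniform: all parties of `n` move to the same set of atoms. -/
def Uniform (N : Negotiation Agent Atom Res) (n : Atom) (r : Res) : Prop :=
  ∀ p ∈ N.parties n, ∀ q ∈ N.parties n, N.trans n p r = N.trans n q r

/-- A replication: all atoms have the same parties and all outcomes are uniform. -/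
def Replication (N : Negotiation Agent Atom Res) : Prop :=
  (∀ n ∈ N.atoms, ∀ m ∈ N.atoms, N.parties n = N.parties m) ∧
  (∀ n ∈ N.atoms, ∀ r ∈ N.results n, N.Uniform n r)

/-- A path of a negotiation: a list of triples `(nᵢ, pᵢ, rᵢ)` with `nᵢ₊₁ ∈ trans nᵢ pᵢ rᵢ`. -/
def IsPath (N : Negotiation Agent Atom Res) (π : List (Atom × Agent × Res)) : Prop :=
  (∀ t ∈ π, t.1 ∈ N.atoms ∧ t.2.1 ∈ N.parties t.1 ∧ t.2.2 ∈ N.results t.1) ∧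
  π.Chain' (fun s t => t.1 ∈ N.trans s.1 s.2.1 s.2.2)

/-- A loop: a nonempty sequence of outcomes leading from some reachable marking back to itself. -/
def IsLoop (N : Negotiation Agent Atom Res) (σ : List (Atom × Res)) : Prop :=
  σ ≠ [] ∧ ∃ x, N.Reachable x ∧ N.Seq x σ x

end Negotiation

namespace Negotiation
variable {Agent : Type u} {Atom : Type v} {Res : Type w}
variable [Fintype Agent] [DecidableEq Agent] [DecidableEq Atom] [DecidableEq Res]

lemma seq_snoc_aux {N : Negotiation Agent Atom Res} {x y z : Marking Agent Atom}
    {σ : List (Atom × Res)} {o : Atom × Res}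
    (h : N.Seq x σ y) (hs : N.StepTo y o z) : N.Seq x (σ ++ [o]) z := by
  induction h with
  | nil _ => exact Seq.cons hs (Seq.nil _)
  | cons h1 _ ih => exact Seq.cons h1 (ih hs)

lemma seq_snoc_inv_aux {N : Negotiation Agent Atom Res} {x z : Marking Agent Atom}
    {σ : List (Atom × Res)} {o : Atom × Res}
    (h : N.Seq x (σ ++ [o]) z) : ∃ y, N.Seq x σ y ∧ N.StepTo y o z := by
  induction σ generalizing x with
  | nil =>
    cases h with
    | cons hs h' => cases h'; exact ⟨x, Seq.nil x, hs⟩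
  | cons a σ ih =>
    cases h with
    | cons hs h' =>
      obtain ⟨w, hw, hso⟩ := ih h'
      exact ⟨w, Seq.cons hs hw, hso⟩

/-- If the arc `(n,p,r,n')` of `N1` never occurs in any initial occurrence sequence,
belongs to a hyperarc with more than one arc, and removing it yields the negotiation `N2`,
then `N1` and `N2` have exactly the same initial occurrence sequences. -/
theorem statement1 (N1 N2 : Negotiation Agent Atom Res) (n : Atom) (p : Agent) (r : Res)
    (n' : Atom)
    (hn : n ∈ N1.atoms) (hp : p ∈ N1.parties n) (hr : r ∈ N1.results n)
    (hn' : n' ∈ N1.trans n p r) (hmulti : 1 < (N1.trans n p r).card)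
    (hnever : ∀ σ x, N1.Seq N1.x0 σ x → ¬ N1.ArcOccursIn n p r n' σ)
    (hatoms : N2.atoms = N1.atoms) (h0 : N2.n0 = N1.n0) (hf : N2.nf = N1.nf)
    (hpar : N2.parties = N1.parties) (hres : N2.results = N1.results)
    (htr : N2.trans n p r = (N1.trans n p r).erase n')
    (htr' : ∀ (m : Atom) (q : Agent) (s : Res), (m, q, s) ≠ (n, p, r) →
      N2.trans m q s = N1.trans m q s) :
    {σ : List (Atom × Res) | ∃ x, N1.Seq N1.x0 σ x} =
      {σ : List (Atom × Res) | ∃ x, N2.Seq N2.x0 σ x} := by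
  have hx0 : N2.x0 = N1.x0 := by
    funext q; simp [x0, h0]
  have htrsub : ∀ (m : Atom) (q : Agent) (s : Res), N2.trans m q s ⊆ N1.trans m q s := by
    intro m q s
    by_cases hmqs : (m, q, s) = (n, p, r)
    · obtain ⟨rfl, rfl, rfl⟩ : m = n ∧ q = p ∧ s = r := by
        simpa [Prod.ext_iff] using hmqs
      rw [htr]; exact Finset.erase_subset _ _
    · rw [htr' _ _ _ hmqs]
  -- easy direction: every N2 sequence is an N1 sequence
  have easy : ∀ (σ : List (Atom × Res)) (x2 z2 : Marking Agent Atom), N2.Seq x2 σ z2 →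
      ∀ x1 : Marking Agent Atom, (∀ q, x2 q ⊆ x1 q) → ∃ z1, N1.Seq x1 σ z1 := by
    intro σ x2 z2 h
    induction h with
    | nil _ => intro x1 _; exact ⟨x1, Seq.nil x1⟩
    | @cons x y z o σ hs hseq ih =>
      intro x1 hsub
      obtain ⟨⟨hma, hmp⟩, hsres, hupd⟩ := hs
      rw [hpar] at hmp
      refine ?_
      set y1 : Marking Agent Atom :=
        fun q => if q ∈ N1.parties o.1 then N1.trans o.1 q o.2 else x1 q with hy1
      have step1 : N1.StepTo x1 o y1 := by
        refine ⟨⟨hatoms ▸ hma, fun q hq => hsub q (hmp q hq)⟩, hres ▸ hsres, fun q => rfl⟩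
      have hsub' : ∀ q, y q ⊆ y1 q := by
        intro q
        rw [hupd q, hy1]
        simp only [hpar]
        by_cases hq : q ∈ N1.parties o.1
        · simp only [hq, if_true]; exact htrsub _ _ _
        · simp only [hq, if_false]; exact hsub q
      obtain ⟨z1, hz1⟩ := ih y1 hsub'
      exact ⟨z1, Seq.cons step1 hz1⟩
  -- hard direction: simulation with a one-atom discrepancy for agent p
  have key : ∀ (σ : List (Atom × Res)) (x1 : Marking Agent Atom), N1.Seq N1.x0 σ x1 →
      ∃ x2 : Marking Agent Atom, N2.Seq N1.x0 σ x2 ∧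
        (x1 = x2 ∨ ((∀ q, q ≠ p → x1 q = x2 q) ∧ x2 p = (x1 p).erase n' ∧ n' ∈ x1 p ∧
          ∃ σ1 σ2 : List (Atom × Res), σ = σ1 ++ (n, r) :: σ2 ∧
            ∀ o ∈ σ2, p ∉ N1.parties o.1)) := by
    intro σ
    induction σ using List.reverseRecOn with
    | nil =>
      intro x1 h
      cases h
      exact ⟨N1.x0, Seq.nil _, Or.inl rfl⟩
    | append_singleton σ o ih =>
      intro x1 h
      obtain ⟨y1, hy1, hstep⟩ := seq_snoc_inv_aux h
      obtain ⟨y2, hy2, hrel⟩ := ih y1 hy1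
      obtain ⟨m, s⟩ := o
      obtain ⟨⟨hma, hmp⟩, hsres, hupd⟩ := hstep
      -- target marking in N2
      set x2 : Marking Agent Atom :=
        fun q => if q ∈ N2.parties m then N2.trans m q s else y2 q with hx2
      have hx2upd : ∀ q, x2 q = if q ∈ N2.parties m then N2.trans m q s else y2 q :=
        fun q => rfl
      have hparm : N2.parties m = N1.parties m := by rw [hpar]
      -- the key fact: p cannot be about to take atom n' while in the discrepancy phase
      have hnn' : (∀ q, q ≠ p → y1 q = y2 q) → y2 p = (y1 p).erase n' →
          (∃ σ1 σ2 : List (Atom × Res), σ = σ1 ++ (n, r) :: σ2 ∧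
            ∀ o ∈ σ2, p ∉ N1.parties o.1) → p ∈ N1.parties m → m ≠ n' := by
        rintro _ _ ⟨σ1, σ2, hσ, hσ2⟩ hpm hc
        refine hnever (σ ++ [(m, s)]) x1 h ?_
        refine ⟨σ1, σ2, [], s, ?_, ?_, hσ2⟩
        · rw [← hc]; exact hsres
        · simp [hσ, hc]
      rcases hrel with rfl | ⟨hq, hy2p, hn'y1, σ1, σ2, hσ, hσ2⟩
      · -- phase A : markings agree
        have hen2 : N2.Enables y1 m := by
          refine ⟨hatoms ▸ hma, fun q hq => ?_⟩
          rw [hparm] at hq; exact hmp q hq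
        have hstep2 : N2.StepTo y1 (m, s) x2 := ⟨hen2, hres ▸ hsres, hx2upd⟩
        refine ⟨x2, seq_snoc_aux hy2 hstep2, ?_⟩
        by_cases hms : (m, s) = (n, r)
        · obtain ⟨rfl, rfl⟩ : m = n ∧ s = r := by simpa [Prod.ext_iff] using hms
          refine Or.inr ⟨fun q hqp => ?_, ?_, ?_, σ, [], by simp, by simp⟩
          · rw [hupd q, hx2upd q, hparm]
            by_cases hqn : q ∈ N1.parties m
            · simp only [hqn, if_true]
              exact (htr' m q s (by simp [Prod.ext_iff, hqp])).symm
            · simp [hqn]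
          · rw [hupd p, hx2upd p, hparm]
            simp only [hp, if_true]
            rw [htr]
          · rw [hupd p]; simp only [hp, if_true]; exact hn'
        · refine Or.inl (funext fun q => ?_)
          rw [hupd q, hx2upd q, hparm]
          by_cases hqn : q ∈ N1.parties m
          · simp only [hqn, if_true]
            exact (htr' m q s (by
              intro hc
              apply hms
              have : m = n ∧ q = p ∧ s = r := by simpa [Prod.ext_iff] using hc
              simp [Prod.ext_iff, this.1, this.2.2])).symm
          · simp [hqn]
      · -- phase B : discrepancy at agent p
        have hmne : p ∈ N1.parties m → m ≠ n' :=
          hnn' hq hy2p ⟨σ1, σ2, hσ, hσ2⟩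
        have hen2 : N2.Enables y2 m := by
          refine ⟨hatoms ▸ hma, fun q hqm => ?_⟩
          rw [hparm] at hqm
          by_cases hqp : q = p
          · subst hqp
            rw [hy2p, Finset.mem_erase]
            exact ⟨hmne hqm, hmp q hqm⟩
          · rw [← hq q hqp]; exact hmp q hqm
        have hstep2 : N2.StepTo y2 (m, s) x2 := ⟨hen2, hres ▸ hsres, hx2upd⟩
        refine ⟨x2, seq_snoc_aux hy2 hstep2, ?_⟩
        by_cases hpm : p ∈ N1.parties m
        · by_cases hms : (m, s) = (n, r)
          · obtain ⟨rfl, rfl⟩ : m = n ∧ s = r := by simpa [Prod.ext_iff] using hms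
            refine Or.inr ⟨fun q hqp => ?_, ?_, ?_, σ, [], by simp, by simp⟩
            · rw [hupd q, hx2upd q, hparm]
              by_cases hqn : q ∈ N1.parties m
              · simp only [hqn, if_true]
                exact (htr' m q s (by simp [Prod.ext_iff, hqp])).symm
              · simp only [hqn, if_false]; exact hq q hqp
            · rw [hupd p, hx2upd p, hparm]
              simp only [hp, if_true]
              rw [htr]
            · rw [hupd p]; simp only [hp, if_true]; exact hn'
          · refine Or.inl (funext fun q => ?_)
            rw [hupd q, hx2upd q, hparm]
            by_cases hqn : q ∈ N1.parties m
            · simp only [hqn, if_true]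
              exact (htr' m q s (by
                intro hc
                apply hms
                have : m = n ∧ q = p ∧ s = r := by simpa [Prod.ext_iff] using hc
                simp [Prod.ext_iff, this.1, this.2.2])).symm
            · simp only [hqn, if_false]
              by_cases hqp : q = p
              · subst hqp; exact absurd hpm hqn
              · exact hq q hqp
        · refine Or.inr ⟨fun q hqp => ?_, ?_, ?_, σ1, σ2 ++ [(m, s)], by rw [hσ]; simp, ?_⟩
          · rw [hupd q, hx2upd q, hparm]
            by_cases hqn : q ∈ N1.parties m
            · simp only [hqn, if_true]
              exact (htr' m q s (by simp [Prod.ext_iff, hqp])).symm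
            · simp only [hqn, if_false]; exact hq q hqp
          · rw [hupd p, hx2upd p, hparm]
            simp only [hpm, if_false]
            exact hy2p
          · rw [hupd p]; simp only [hpm, if_false]; exact hn'y1
          · intro o ho
            rcases List.mem_append.mp ho with ho | ho
            · exact hσ2 o ho
            · simp at ho; subst ho; exact hpm
  ext σ
  simp only [Set.mem_setOf_eq]
  constructor
  · rintro ⟨x1, h⟩
    obtain ⟨x2, hx2, -⟩ := key σ x1 h
    exact ⟨x2, hx0 ▸ hx2⟩
  · rintro ⟨x2, h⟩
    rw [hx0] at h
    exact easy σ N1.x0 x2 h N1.x0 (fun q => le_refl _)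

end Negotiation
end

section
/- Let N2 be obtained from a negotiation N1 by applying the shortcut rule to an outcome (n,r) that unconditionally enables an atom n' ≠ n. Then N1 is sound if and only if N2 is sound. -/
universe u v w

namespace Negotiation
variable {Agent : Type u} {Atom : Type v} {Res : Type w}
variable [Fintype Agent] [DecidableEq Agent] [DecidableEq Atom] [DecidableEq Res]

/-!
Write `P'` for the parties of `n'`. Every step of `N2` is a step of `N1`, except the fused
outcomes `(n, f r')`, which are the two steps `(n, r) (n', r')` of `N1`; so `N2` simulates
into `N1`. Conversely, after an occurrence of `(n, r)` in `N1` all agents of `P'` are committed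
to `n'`, so the next outcome involving `P'` is an occurrence of `n'`, and it commutes with
everything in between; moving it forward fuses it with `(n, r)`. Hence an `N1`-run either
is an `N2`-run, or ends in a marking where `P'` waits at `n'` and each occurrence of `n'`
leads to an `N2`-reachable marking. Both halves of soundness transfer through this picture;
when `n'` survives in `N2`, some other outcome commits an agent of `P'` to `n'`, and since `N1`
terminates that agent must eventually see `n'` enabled.
-/

section Occurrence

def fire (N : Negotiation Agent Atom Res) (x : Marking Agent Atom) (o : Atom × Res) :
    Marking Agent Atom :=
  fun p => if p ∈ N.parties o.1 then N.trans o.1 p o.2 else x p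

variable {N : Negotiation Agent Atom Res} {x y z u w : Marking Agent Atom}
  {a : Atom} {o : Atom × Res} {σ τ : List (Atom × Res)} {p : Agent}

theorem stepTo_fire (hx : N.Enables x o.1) (ho : o.2 ∈ N.results o.1) :
    N.StepTo x o (N.fire x o) :=
  ⟨hx, ho, fun _ => rfl⟩

theorem StepTo.eq_fire (hs : N.StepTo x o y) : y = N.fire x o :=
  funext hs.2.2

theorem Seq.append (h₁ : N.Seq x σ y) (h₂ : N.Seq y τ z) : N.Seq x (σ ++ τ) z := by
  induction h₁ with
  | nil => exact h₂
  | cons hs _ ih => exact .cons hs (ih h₂)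

theorem Seq.apply_eq_of_not_mem_parties (hs : N.Seq x σ y)
    (hp : ∀ o ∈ σ, p ∉ N.parties o.1) : y p = x p := by
  induction hs with
  | nil => rfl
  | cons hs _ ih =>
    rw [ih fun o ho => hp o (List.mem_cons_of_mem _ ho), hs.2.2 p,
      if_neg (hp _ List.mem_cons_self)]

theorem Reachable.seq (hx : N.Reachable x) (hs : N.Seq x σ y) : N.Reachable y :=
  let ⟨_, h₀⟩ := hx
  ⟨_, h₀.append hs⟩

theorem Reachable.stepTo (hx : N.Reachable x) (hs : N.StepTo x o y) : N.Reachable y :=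
  hx.seq (.cons hs (.nil y))

theorem Seq.subset_atoms (hs : N.Seq x σ y) (hx : ∀ p, x p ⊆ N.atoms) (p : Agent) :
    y p ⊆ N.atoms := by
  induction hs with
  | nil => exact hx p
  | cons hs _ ih =>
    refine ih fun q => ?_
    rw [hs.2.2 q]
    split_ifs with hq
    · exact N.trans_sub _ hs.1.1 q hq _ hs.2.1
    · exact hx q

theorem Reachable.mem_atoms (hx : N.Reachable x) (ha : a ∈ x p) : a ∈ N.atoms := by
  obtain ⟨σ, hσ⟩ := hx
  refine hσ.subset_atoms (fun q => ?_) p ha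
  simpa [x0] using N.n0_mem

theorem StepTo.swap {b : Atom × Res} (h₁ : N.StepTo x o y) (h₂ : N.StepTo y b z)
    (hob : ∀ p ∈ N.parties b.1, p ∉ N.parties o.1) :
    ∃ y', N.StepTo x b y' ∧ N.StepTo y' o z := by
  refine ⟨N.fire x b, stepTo_fire ⟨h₂.1.1, fun p hp => ?_⟩ h₂.2.1,
    ⟨h₁.1.1, fun p hp => ?_⟩, h₁.2.1, fun p => ?_⟩
  · simpa [h₁.2.2 p, hob p hp] using h₂.1.2 p hp
  · have hb : p ∉ N.parties b.1 := fun hb => hob p hb hp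
    simpa [fire, hb] using h₁.1.2 p hp
  · rw [h₂.2.2 p, h₁.2.2 p]
    by_cases hb : p ∈ N.parties b.1
    · simp [fire, hb, hob p hb]
    · simp [fire, hb]

theorem Seq.replay {S : Finset Agent} (hs : N.Seq w σ y)
    (hσ : ∀ o ∈ σ, ∀ p ∈ S, p ∉ N.parties o.1) (hu : ∀ p ∉ S, u p = w p) :
    N.Seq u σ (fun p => if p ∈ S then u p else y p) := by
  induction hs generalizing u with
  | nil w =>
    have hu' : (fun p => if p ∈ S then u p else w p : Marking Agent Atom) = u :=
      funext fun p => by by_cases hp : p ∈ S <;> simp [hp, hu]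
    rw [hu']
    exact .nil u
  | @cons w w₁ y o σ hs _ ih =>
    have ho : ∀ p ∈ S, p ∉ N.parties o.1 := hσ o List.mem_cons_self
    have hst : N.StepTo u o (N.fire u o) := by
      refine stepTo_fire ⟨hs.1.1, fun p hp => ?_⟩ hs.2.1
      rw [hu p fun hpS => ho p hpS hp]
      exact hs.1.2 p hp
    have hfire : (fun p => if p ∈ S then N.fire u o p else y p : Marking Agent Atom) =
        fun p => if p ∈ S then u p else y p :=
      funext fun p => by by_cases hp : p ∈ S <;> simp [fire, hp, ho p]
    rw [← hfire]
    refine .cons hst (ih (fun o ho' => hσ o (List.mem_cons_of_mem _ ho')) fun p hp => ?_)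
    by_cases hpo : p ∈ N.parties o.1 <;> simp [fire, hs.2.2 p, hpo, hu p hp]

-- The first outcome involving a party of `a` must be `a` itself, and it shares no party
-- with the outcomes before it, so it can be moved to the front.
theorem Seq.avoids_or_split_of_waiting (hs : N.Seq w σ y)
    (hw : ∀ p ∈ N.parties a, w p = {a}) :
    (∀ o ∈ σ, ∀ p ∈ N.parties a, p ∉ N.parties o.1) ∨
      ∃ γ s δ w', σ = γ ++ (a, s) :: δ ∧ (∀ o ∈ γ, ∀ p ∈ N.parties a, p ∉ N.parties o.1) ∧
        N.StepTo w (a, s) w' ∧ N.Seq w' (γ ++ δ) y := by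
  induction hs with
  | nil => exact .inl (by simp)
  | @cons w w₁ y o σ hst hσ ih =>
    by_cases ho : ∀ p ∈ N.parties a, p ∉ N.parties o.1
    · have hw₁ : ∀ p ∈ N.parties a, w₁ p = {a} := fun p hp => by
        rw [hst.2.2 p, if_neg (ho p hp), hw p hp]
      rcases ih hw₁ with hav | ⟨γ, s, δ, w', rfl, hγ, hst', hrest⟩
      · exact .inl (List.forall_mem_cons.2 ⟨ho, hav⟩)
      · obtain ⟨w'', h₁, h₂⟩ := hst.swap hst' ho
        exact .inr ⟨o :: γ, s, δ, w'', rfl, List.forall_mem_cons.2 ⟨ho, hγ⟩, h₁, .cons h₂ hrest⟩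
    · simp only [not_forall, not_not] at ho
      obtain ⟨p, hpa, hpo⟩ := ho
      have hoa : o.1 = a := by simpa [hw p hpa] using hst.1.2 p hpo
      obtain ⟨m, s⟩ := o
      subst hoa
      exact .inr ⟨[], s, σ, w₁, rfl, by simp, hst, hσ⟩

theorem Seq.exists_enables_of_waiting (hs : N.Seq x σ y) (hx : x p = {a}) (hy : y p ≠ {a}) :
    ∃ α x', (∀ o ∈ α, p ∉ N.parties o.1) ∧ N.Seq x α x' ∧ N.Enables x' a := by
  induction hs with
  | nil => exact absurd hx hy
  | @cons x x₁ y o σ hst hσ ih =>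
    by_cases hpo : p ∈ N.parties o.1
    · have hoa : o.1 = a := by simpa [hx] using hst.1.2 p hpo
      exact ⟨[], x, by simp, .nil x, hoa ▸ hst.1⟩
    · have hx₁ : x₁ p = {a} := by rw [hst.2.2 p, if_neg hpo, hx]
      obtain ⟨α, x', hα, hx₁x', hx'⟩ := ih hx₁ hy
      exact ⟨o :: α, x', List.forall_mem_cons.2 ⟨hpo, hα⟩, .cons hst hx₁x', hx'⟩

end Occurrence

-- The second alternative describes an `N1`-run whose last `(n, r)` still awaits its `n'`.
def ReachesWithPending (N1 N2 : Negotiation Agent Atom Res) (n' : Atom)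
    (x y : Marking Agent Atom) : Prop :=
  (∃ σ, N2.Seq x σ y) ∨
    (∀ p ∈ N1.parties n', y p = {n'}) ∧
      ∀ r' ∈ N1.results n', ∃ σ, N2.Seq x σ (N1.fire y (n', r'))

theorem ReachesWithPending.cons {N1 N2 : Negotiation Agent Atom Res} {n' : Atom}
    {x x₁ y : Marking Agent Atom} {o : Atom × Res} (h : ReachesWithPending N1 N2 n' x₁ y)
    (hs : N2.StepTo x o x₁) : ReachesWithPending N1 N2 n' x y :=
  h.imp (fun ⟨σ, hσ⟩ => ⟨o :: σ, .cons hs hσ⟩)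
    (.imp_right fun hfire r' hr' =>
      let ⟨σ, hσ⟩ := hfire r' hr'
      ⟨o :: σ, .cons hs hσ⟩)

namespace ShortcutRuleAt

variable {N1 N2 : Negotiation Agent Atom Res} {n n' m : Atom} {r r' s : Res} {f : Res → Res}
  {x y : Marking Agent Atom} {σ : List (Atom × Res)} {p : Agent}

theorem n_mem (h : ShortcutRuleAt N1 N2 n r n' f) : n ∈ N1.atoms := h.1

theorem n'_mem (h : ShortcutRuleAt N1 N2 n r n' f) : n' ∈ N1.atoms := h.2.1

theorem r_mem (h : ShortcutRuleAt N1 N2 n r n' f) : r ∈ N1.results n := h.2.2.1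

theorem ne (h : ShortcutRuleAt N1 N2 n r n' f) : n' ≠ n := h.2.2.2.1

theorem uncondEnables (h : ShortcutRuleAt N1 N2 n r n' f) : N1.UncondEnables n r n' :=
  h.2.2.2.2.1

theorem exclusiveAccess_or_commitsTo (h : ShortcutRuleAt N1 N2 n r n' f) :
    N1.ExclusiveAccess n r n' ∨ ∃ m s, m ∈ N1.atoms ∧ s ∈ N1.results m ∧
      (m, s) ≠ (n, r) ∧ N1.CommitsTo m s n' := by
  rcases h.2.2.2.2.2.1 with ⟨-, hE⟩ | ⟨-, hcommit⟩ | ⟨-, hE, -⟩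
  exacts [.inl hE, .inr hcommit, .inl hE]

theorem n0_eq (h : ShortcutRuleAt N1 N2 n r n' f) : N2.n0 = N1.n0 := h.2.2.2.2.2.2.2.2.1

theorem parties_eq (h : ShortcutRuleAt N1 N2 n r n' f) : N2.parties = N1.parties :=
  h.2.2.2.2.2.2.2.2.2.1

theorem results_self (h : ShortcutRuleAt N1 N2 n r n' f) :
    N2.results n = (N1.results n).erase r ∪ (N1.results n').image f :=
  h.2.2.2.2.2.2.2.2.2.2.1

theorem results_of_ne (h : ShortcutRuleAt N1 N2 n r n' f) (hm : m ≠ n) :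
    N2.results m = N1.results m :=
  h.2.2.2.2.2.2.2.2.2.2.2.1 m hm

theorem trans_fused (h : ShortcutRuleAt N1 N2 n r n' f) (hr' : r' ∈ N1.results n')
    (hp : p ∈ N1.parties n') : N2.trans n p (f r') = N1.trans n' p r' :=
  h.2.2.2.2.2.2.2.2.2.2.2.2.1 r' hr' p hp

theorem trans_fused_of_not_mem (h : ShortcutRuleAt N1 N2 n r n' f) (hr' : r' ∈ N1.results n')
    (hp : p ∈ N1.parties n) (hp' : p ∉ N1.parties n') : N2.trans n p (f r') = N1.trans n p r :=
  h.2.2.2.2.2.2.2.2.2.2.2.2.2.1 r' hr' p hp hp'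

theorem trans_self_of_mem_erase (h : ShortcutRuleAt N1 N2 n r n' f)
    (hs : s ∈ (N1.results n).erase r) : N2.trans n p s = N1.trans n p s :=
  h.2.2.2.2.2.2.2.2.2.2.2.2.2.2.1 s hs p

theorem trans_of_ne (h : ShortcutRuleAt N1 N2 n r n' f) (hm : m ≠ n) :
    N2.trans m = N1.trans m :=
  h.2.2.2.2.2.2.2.2.2.2.2.2.2.2.2.1 m hm

theorem atoms_of_exclusiveAccess (h : ShortcutRuleAt N1 N2 n r n' f)
    (hE : N1.ExclusiveAccess n r n') : N2.atoms = N1.atoms.erase n' :=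
  h.2.2.2.2.2.2.2.2.2.2.2.2.2.2.2.2.1 hE

theorem atoms_of_not_exclusiveAccess (h : ShortcutRuleAt N1 N2 n r n' f)
    (hE : ¬ N1.ExclusiveAccess n r n') : N2.atoms = N1.atoms :=
  h.2.2.2.2.2.2.2.2.2.2.2.2.2.2.2.2.2.1 hE

theorem atoms_subset (h : ShortcutRuleAt N1 N2 n r n' f) : N2.atoms ⊆ N1.atoms := by
  by_cases hE : N1.ExclusiveAccess n r n'
  · exact h.atoms_of_exclusiveAccess hE ▸ Finset.erase_subset _ _
  · exact (h.atoms_of_not_exclusiveAccess hE).subset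

theorem mem_atoms_of_ne (h : ShortcutRuleAt N1 N2 n r n' f) (hm : m ∈ N1.atoms)
    (hm' : m ≠ n') : m ∈ N2.atoms := by
  by_cases hE : N1.ExclusiveAccess n r n'
  · simp [h.atoms_of_exclusiveAccess hE, hm, hm']
  · simp [h.atoms_of_not_exclusiveAccess hE, hm]

theorem not_exclusiveAccess_of_mem (h : ShortcutRuleAt N1 N2 n r n' f)
    (hn' : n' ∈ N2.atoms) : ¬ N1.ExclusiveAccess n r n' := fun hE => by
  simp [h.atoms_of_exclusiveAccess hE] at hn'

theorem x0_eq (h : ShortcutRuleAt N1 N2 n r n' f) : N2.x0 = N1.x0 := by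
  unfold x0
  rw [h.n0_eq]

theorem enables_iff (h : ShortcutRuleAt N1 N2 n r n' f) (hm : m ∈ N2.atoms) :
    N2.Enables x m ↔ N1.Enables x m := by
  simp [Enables, h.parties_eq, hm, h.atoms_subset hm]

theorem ne_or_mem_erase (hms : (m, s) ≠ (n, r)) (hs : s ∈ N1.results m) :
    m ≠ n ∨ s ∈ (N1.results n).erase r := by
  by_cases hmn : m = n
  · subst hmn
    exact .inr (Finset.mem_erase.2 ⟨fun hsr => hms (by rw [hsr]), hs⟩)
  · exact .inl hmn

theorem stepTo_iff (h : ShortcutRuleAt N1 N2 n r n' f) (hm : m ∈ N2.atoms)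
    (hms : m ≠ n ∨ s ∈ (N1.results n).erase r) :
    N2.StepTo x (m, s) y ↔ N1.StepTo x (m, s) y := by
  have htrans : ∀ p, N2.trans m p s = N1.trans m p s := fun p => by
    by_cases hmn : m = n
    · subst hmn
      exact h.trans_self_of_mem_erase (hms.resolve_left (not_not.2 rfl))
    · rw [h.trans_of_ne hmn]
  have hres : s ∈ N2.results m ↔ s ∈ N1.results m := by
    by_cases hmn : m = n
    · subst hmn
      have hs := hms.resolve_left (not_not.2 rfl)
      simp only [h.results_self, Finset.mem_union, hs, true_or, Finset.mem_of_mem_erase hs]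
    · rw [h.results_of_ne hmn]
  simp only [StepTo, h.enables_iff hm, hres, h.parties_eq, htrans]

theorem fire_self_apply (h : ShortcutRuleAt N1 N2 n r n' f) (hp : p ∈ N1.parties n') :
    N1.fire x (n, r) p = {n'} := by
  simp [fire, h.uncondEnables.1 hp, h.uncondEnables.2 p hp]

theorem enables_fire_self (h : ShortcutRuleAt N1 N2 n r n' f) :
    N1.Enables (N1.fire x (n, r)) n' :=
  ⟨h.n'_mem, fun p hp => by simp [h.fire_self_apply hp]⟩

theorem stepTo_fused (h : ShortcutRuleAt N1 N2 n r n' f) (hx : N1.Enables x n)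
    (hr' : r' ∈ N1.results n') :
    N2.StepTo x (n, f r') (N1.fire (N1.fire x (n, r)) (n', r')) := by
  have hn : n ∈ N2.atoms := h.mem_atoms_of_ne h.n_mem h.ne.symm
  refine ⟨(h.enables_iff hn).2 hx, ?_, fun p => ?_⟩
  · rw [h.results_self]
    exact Finset.mem_union_right _ (Finset.mem_image_of_mem f hr')
  · by_cases hp' : p ∈ N1.parties n'
    · simp [fire, h.parties_eq, hp', h.uncondEnables.1 hp', h.trans_fused hr' hp']
    · by_cases hp : p ∈ N1.parties n
      · simp [fire, h.parties_eq, hp', hp, h.trans_fused_of_not_mem hr' hp hp']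
      · simp [fire, h.parties_eq, hp', hp]

theorem seq_of_stepTo_fused (h : ShortcutRuleAt N1 N2 n r n' f) (hr' : r' ∈ N1.results n')
    (hs : N2.StepTo x (n, f r') y) : N1.Seq x [(n, r), (n', r')] y := by
  have hx : N1.Enables x n := (h.enables_iff hs.1.1).1 hs.1
  rw [hs.eq_fire, ← (h.stepTo_fused hx hr').eq_fire]
  exact .cons (stepTo_fire hx h.r_mem) (.cons (stepTo_fire h.enables_fire_self hr') (.nil _))

theorem seq₁_of_seq₂ (h : ShortcutRuleAt N1 N2 n r n' f) (hs : N2.Seq x σ y) :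
    ∃ σ', N1.Seq x σ' y := by
  induction hs with
  | nil x => exact ⟨[], .nil x⟩
  | @cons x x₁ y o σ hst _ ih =>
    obtain ⟨σ', hσ'⟩ := ih
    obtain ⟨m, s⟩ := o
    by_cases hfused : m = n ∧ s ∉ (N1.results n).erase r
    · obtain ⟨rfl, hs⟩ := hfused
      have hs₂ := hst.2.1
      rw [h.results_self, Finset.mem_union, or_iff_right hs, Finset.mem_image] at hs₂
      obtain ⟨r', hr', rfl⟩ := hs₂
      exact ⟨_, (h.seq_of_stepTo_fused hr' hst).append hσ'⟩
    · rw [not_and_or, not_not] at hfused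
      exact ⟨_, .cons ((h.stepTo_iff hst.1.1 hfused).1 hst) hσ'⟩

theorem reachable₁_of_reachable₂ (h : ShortcutRuleAt N1 N2 n r n' f) (hx : N2.Reachable x) :
    N1.Reachable x := by
  obtain ⟨σ, hσ⟩ := hx
  rw [h.x0_eq] at hσ
  exact h.seq₁_of_seq₂ hσ

theorem seq₂_of_seq₁ (h : ShortcutRuleAt N1 N2 n r n' f) (hp : p ∈ N1.parties n')
    (hσ : ∀ o ∈ σ, p ∉ N1.parties o.1) (hs : N1.Seq x σ y) : N2.Seq x σ y := by
  induction hs with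
  | nil x => exact .nil x
  | @cons x x₁ y o σ hst _ ih =>
    obtain ⟨m, s⟩ := o
    have hpm : p ∉ N1.parties m := hσ _ List.mem_cons_self
    have hmn : m ≠ n := by rintro rfl; exact hpm (h.uncondEnables.1 hp)
    have hmn' : m ≠ n' := by rintro rfl; exact hpm hp
    have hst₂ := (h.stepTo_iff (h.mem_atoms_of_ne hst.1.1 hmn') (.inl hmn)).2 hst
    exact .cons hst₂ (ih fun o ho => hσ o (List.mem_cons_of_mem _ ho))

theorem waiting_of_seq_fire_self (h : ShortcutRuleAt N1 N2 n r n' f) (hx : N1.Enables x n)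
    (hs : N1.Seq (N1.fire x (n, r)) σ y) (hσ : ∀ o ∈ σ, ∀ p ∈ N1.parties n', p ∉ N1.parties o.1) :
    (∀ p ∈ N1.parties n', y p = {n'}) ∧
      ∀ r' ∈ N1.results n', N2.Seq x ((n, f r') :: σ) (N1.fire y (n', r')) := by
  refine ⟨fun p hp => ?_, fun r' hr' => ?_⟩
  · rw [hs.apply_eq_of_not_mem_parties fun o ho => hσ o ho p hp, h.fire_self_apply hp]
  · have hreplay := hs.replay hσ (u := N1.fire (N1.fire x (n, r)) (n', r'))
      fun p hp => by simp [fire, hp]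
    have hy : (fun p => if p ∈ N1.parties n' then N1.fire (N1.fire x (n, r)) (n', r') p
        else y p : Marking Agent Atom) = N1.fire y (n', r') :=
      funext fun p => by by_cases hp : p ∈ N1.parties n' <;> simp [fire, hp]
    obtain ⟨p, hp⟩ := N1.parties_nonempty n' h.n'_mem
    rw [hy] at hreplay
    exact .cons (h.stepTo_fused hx hr') (h.seq₂_of_seq₁ hp (fun o ho => hσ o ho p hp) hreplay)

theorem reachesWithPending_of_seq (h : ShortcutRuleAt N1 N2 n r n' f) (hx : N2.Reachable x)
    (hs : N1.Seq x σ y) : ReachesWithPending N1 N2 n' x y := by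
  induction hlen : σ.length using Nat.strong_induction_on generalizing σ x with
  | _ k ih =>
  cases hs with
  | nil => exact .inl ⟨[], .nil _⟩
  | @cons _ x₁ _ o σ hst hσ =>
    subst hlen
    by_cases ho : o = (n, r)
    · subst ho
      rw [hst.eq_fire] at hσ
      rcases hσ.avoids_or_split_of_waiting fun p hp => h.fire_self_apply hp with
        hav | ⟨γ, r', δ, w, rfl, -, hst', hrest⟩
      · obtain ⟨hwait, hfire⟩ := h.waiting_of_seq_fire_self hst.1 hσ hav
        exact .inr ⟨hwait, fun r' hr' => ⟨_, hfire r' hr'⟩⟩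
      · have hfused := h.stepTo_fused hst.1 hst'.2.1
        rw [hst'.eq_fire] at hrest
        exact (ih _ (by simp) (hx.stepTo hfused) hrest rfl).cons hfused
    · obtain ⟨m, s⟩ := o
      obtain ⟨p, hp⟩ := N1.parties_nonempty m hst.1.1
      have hm : m ∈ N2.atoms := hx.mem_atoms (hst.1.2 p hp)
      have hst₂ := (h.stepTo_iff hm (ne_or_mem_erase ho hst.2.1)).2 hst
      exact (ih _ (by simp) (hx.stepTo hst₂) hσ rfl).cons hst₂

theorem reachesWithPending_of_reachable (h : ShortcutRuleAt N1 N2 n r n' f)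
    (hx : N1.Reachable x) : ReachesWithPending N1 N2 n' N2.x0 x := by
  obtain ⟨σ, hσ⟩ := hx
  rw [← h.x0_eq] at hσ
  exact h.reachesWithPending_of_seq ⟨[], .nil _⟩ hσ

theorem exists_enables₂_of_enables₁ (h : ShortcutRuleAt N1 N2 n r n' f) (hx : N1.Reachable x)
    (hxm : N1.Enables x m) (hm : m ≠ n') : ∃ z, N2.Reachable z ∧ N2.Enables z m := by
  have hm₂ := h.mem_atoms_of_ne hxm.1 hm
  rcases h.reachesWithPending_of_reachable hx with hx₂ | ⟨hwait, hfire⟩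
  · exact ⟨x, hx₂, (h.enables_iff hm₂).2 hxm⟩
  · obtain ⟨r', hr'⟩ := N1.results_nonempty n' h.n'_mem
    refine ⟨_, hfire r' hr', (h.enables_iff hm₂).2 ⟨hxm.1, fun p hp => ?_⟩⟩
    have hp' : p ∉ N1.parties n' := fun hp' => hm (by simpa [hwait p hp'] using hxm.2 p hp)
    simpa [fire, hp'] using hxm.2 p hp

theorem exists_reachable₂_waiting (h : ShortcutRuleAt N1 N2 n r n' f)
    (hen : ∀ m ∈ N1.atoms, ∃ x, N1.Reachable x ∧ N1.Enables x m) (hn' : n' ∈ N2.atoms) :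
    ∃ x, ∃ p ∈ N1.parties n', N2.Reachable x ∧ x p = {n'} := by
  obtain ⟨m, s, hm, hs, hms, p, hpm, hcommit⟩ :=
    h.exclusiveAccess_or_commitsTo.resolve_left (h.not_exclusiveAccess_of_mem hn')
  have hp : p ∈ N1.parties n' := N1.trans_parties m hm p hpm s hs n' (by simp [hcommit])
  by_cases hmn' : m = n'
  · subst hmn'
    have hn₂ := h.mem_atoms_of_ne h.n_mem h.ne.symm
    obtain ⟨x, hx, hxn⟩ := hen n h.n_mem
    obtain ⟨z, hz, hzn⟩ := h.exists_enables₂_of_enables₁ hx hxn h.ne.symm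
    refine ⟨_, p, hp, hz.stepTo (h.stepTo_fused ((h.enables_iff hn₂).1 hzn) hs), ?_⟩
    simp [fire, hp, hcommit]
  · have hm₂ := h.mem_atoms_of_ne hm hmn'
    obtain ⟨x, hx, hxm⟩ := hen m hm
    obtain ⟨z, hz, hzm⟩ := h.exists_enables₂_of_enables₁ hx hxm hmn'
    have hst : N2.StepTo z (m, s) (N1.fire z (m, s)) :=
      (h.stepTo_iff hm₂ (ne_or_mem_erase hms hs)).2
        (stepTo_fire ((h.enables_iff hm₂).1 hzm) hs)
    exact ⟨_, p, hp, hz.stepTo hst, by simp [fire, hpm, hcommit]⟩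

theorem exists_enables₂_of_waiting (h : ShortcutRuleAt N1 N2 n r n' f) (hn' : n' ∈ N2.atoms)
    (hx : N2.Reachable x) (hp : p ∈ N1.parties n') (hxp : x p = {n'})
    (hs : N1.Seq x σ N1.xf) : ∃ z, N2.Reachable z ∧ N2.Enables z n' := by
  obtain ⟨α, z, hα, hxz, hz⟩ := hs.exists_enables_of_waiting hxp (by simp [xf])
  exact ⟨z, hx.seq (h.seq₂_of_seq₁ hp hα hxz), (h.enables_iff hn').2 hz⟩

theorem sound₂_of_sound₁ (h : ShortcutRuleAt N1 N2 n r n' f) (hN1 : N1.Sound) : N2.Sound := by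
  obtain ⟨hen, hfin⟩ := hN1
  refine ⟨fun m hm => ?_, fun x hx => ?_⟩
  · by_cases hmn' : m = n'
    · subst hmn'
      obtain ⟨x, p, hp, hx, hxp⟩ := h.exists_reachable₂_waiting hen hm
      obtain ⟨σ, hσ⟩ := hfin x (h.reachable₁_of_reachable₂ hx)
      exact h.exists_enables₂_of_waiting hm hx hp hxp hσ
    · obtain ⟨x, hx, hxm⟩ := hen m (h.atoms_subset hm)
      exact h.exists_enables₂_of_enables₁ hx hxm hmn'
  · obtain ⟨σ, hσ⟩ := hfin x (h.reachable₁_of_reachable₂ hx)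
    rcases h.reachesWithPending_of_seq hx hσ with hσ₂ | ⟨hwait, -⟩
    · exact hσ₂
    · obtain ⟨p, hp⟩ := N1.parties_nonempty n' h.n'_mem
      simpa [xf] using hwait p hp

theorem sound₁_of_sound₂ (h : ShortcutRuleAt N1 N2 n r n' f) (hN2 : N2.Sound) : N1.Sound := by
  obtain ⟨hen, hfin⟩ := hN2
  refine ⟨fun m hm => ?_, fun x hx => ?_⟩
  · by_cases hmn' : m = n'
    · have hn₂ := h.mem_atoms_of_ne h.n_mem h.ne.symm
      obtain ⟨z, hz, hzn⟩ := hen n hn₂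
      have hst : N1.StepTo z (n, r) (N1.fire z (n, r)) :=
        stepTo_fire ((h.enables_iff hn₂).1 hzn) h.r_mem
      exact ⟨_, (h.reachable₁_of_reachable₂ hz).stepTo hst, hmn' ▸ h.enables_fire_self⟩
    · have hm₂ := h.mem_atoms_of_ne hm hmn'
      obtain ⟨z, hz, hzm⟩ := hen m hm₂
      exact ⟨z, h.reachable₁_of_reachable₂ hz, (h.enables_iff hm₂).1 hzm⟩
  · rcases h.reachesWithPending_of_reachable hx with hx₂ | ⟨hwait, hfire⟩
    · obtain ⟨σ, hσ⟩ := hfin x hx₂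
      exact h.seq₁_of_seq₂ hσ
    · obtain ⟨r', hr'⟩ := N1.results_nonempty n' h.n'_mem
      obtain ⟨σ, hσ⟩ := hfin _ (hfire r' hr')
      obtain ⟨σ', hσ'⟩ := h.seq₁_of_seq₂ hσ
      have hst : N1.StepTo x (n', r') (N1.fire x (n', r')) :=
        stepTo_fire ⟨h.n'_mem, fun p hp => by simp [hwait p hp]⟩ hr'
      exact ⟨_, .cons hst hσ'⟩

end ShortcutRuleAt

/-- The shortcut rule preserves soundness and unsoundness. -/
theorem statement3 (N1 N2 : Negotiation Agent Atom Res) (n n' : Atom) (r : Res)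
    (f : Res → Res) (h : ShortcutRuleAt N1 N2 n r n' f) :
    N1.Sound ↔ N2.Sound :=
  ⟨h.sound₂_of_sound₁, h.sound₁_of_sound₂⟩

end Negotiation
end

section
/- The application of any of the merge, iteration, useless-arc, or shortcut rules to a deterministic negotiation yields a deterministic negotiation, and applying them to an acyclic negotiation yields an acyclic negotiation. -/
universe u v w

namespace Negotiation
variable {Agent : Type u} {Atom : Type v} {Res : Type w}
variable [Fintype Agent] [DecidableEq Agent] [DecidableEq Atom] [DecidableEq Res]

private lemma acyclic_of_edge_le {N1 N2 : Negotiation Agent Atom Res}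
    (hle : ∀ a b, N2.Edge a b → Relation.TransGen N1.Edge a b) :
    N1.Acyclic → N2.Acyclic := by
  intro h n hn
  have key : ∀ a b, Relation.TransGen N2.Edge a b → Relation.TransGen N1.Edge a b := by
    intro a b hab
    induction hab with
    | single h' => exact hle _ _ h'
    | tail _ h' ih => exact ih.trans (hle _ _ h')
  exact h n (key n n hn)

/-- The merge, iteration, useless-arc and shortcut rules preserve determinism and
acyclicity. -/
theorem statement4 (N1 N2 : Negotiation Agent Atom Res)
    (h : MergeRule N1 N2 ∨ IterationRule N1 N2 ∨ UselessArcRule N1 N2 ∨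
      ShortcutRule N1 N2) :
    (N1.Deterministic → N2.Deterministic) ∧ (N1.Acyclic → N2.Acyclic) := by
  rcases h with h | h | h | h
  · -- Merge rule
    obtain ⟨n, r1, r2, r, hn, hnnf, hr1, hr2, -, -, -, hatoms, -, hnf, hparties,
      hresn, hresm, htrr, htrold, htrm⟩ := h
    have hsubres : ((N1.results n).erase r1).erase r2 ⊆ N1.results n :=
      (Finset.erase_subset _ _).trans (Finset.erase_subset _ _)
    constructor
    · intro hdet p m hm hmnf hp rr hrr
      rw [hatoms] at hm
      rw [hnf] at hmnf
      rw [hparties] at hp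
      by_cases hmn : m = n
      · subst hmn
        rw [hresn] at hrr
        rcases Finset.mem_insert.mp hrr with hrr | hrr
        · subst hrr
          rw [htrr p]
          exact hdet p m hm hmnf hp r1 hr1
        · rw [htrold p rr hrr]
          exact hdet p m hm hmnf hp rr (hsubres hrr)
      · rw [htrm m hmn]
        rw [hresm m hmn] at hrr
        exact hdet p m hm hmnf hp rr hrr
    · refine acyclic_of_edge_le ?_
      rintro a b ⟨ha, hb, q, hq, rr, hrr, hbtr⟩
      rw [hatoms] at ha hb
      rw [hparties] at hq
      by_cases han : a = n
      · subst han
        rw [hresn] at hrr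
        rcases Finset.mem_insert.mp hrr with hrr | hrr
        · subst hrr
          rw [htrr q] at hbtr
          exact Relation.TransGen.single ⟨ha, hb, q, hq, r1, hr1, hbtr⟩
        · rw [htrold q rr hrr] at hbtr
          exact Relation.TransGen.single ⟨ha, hb, q, hq, rr, hsubres hrr, hbtr⟩
      · rw [htrm a han] at hbtr
        rw [hresm a han] at hrr
        exact Relation.TransGen.single ⟨ha, hb, q, hq, rr, hrr, hbtr⟩
  · -- Iteration rule
    obtain ⟨n, r, hn, hr, -, hatoms, -, hnf, hparties, hresn, hresm, htr⟩ := h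
    have hres : ∀ m, N2.results m ⊆ N1.results m := by
      intro m
      by_cases hmn : m = n
      · subst hmn; rw [hresn]; exact Finset.erase_subset _ _
      · rw [hresm m hmn]
    constructor
    · intro hdet p m hm hmnf hp rr hrr
      rw [hatoms] at hm
      rw [hnf] at hmnf
      rw [hparties] at hp
      rw [htr]
      exact hdet p m hm hmnf hp rr (hres m hrr)
    · refine acyclic_of_edge_le ?_
      rintro a b ⟨ha, hb, q, hq, rr, hrr, hbtr⟩
      rw [hatoms] at ha hb
      rw [hparties] at hq
      rw [htr] at hbtr
      exact Relation.TransGen.single ⟨ha, hb, q, hq, rr, hres a hrr, hbtr⟩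
  · -- Useless arc rule
    obtain ⟨n, p, q, r, n', n'', hn, hp, hq, hr, hpq, hne, hn', hn'', htrq,
      hatoms, -, hnf, hparties, hres, htrnpr, htrother⟩ := h
    have hnnf : n ≠ N1.nf := by
      intro hh
      have := (N1.trans_empty_iff n hn p hp r hr).mpr hh
      rw [this] at hn'
      exact absurd hn' (Finset.notMem_empty _)
    constructor
    · intro hdet
      exfalso
      obtain ⟨n3, h3⟩ := hdet p n hn hnnf hp r hr
      rw [h3, Finset.mem_singleton] at hn' hn''
      exact hne (hn'.trans hn''.symm)
    · refine acyclic_of_edge_le ?_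
      rintro a b ⟨ha, hb, q', hq', rr, hrr, hbtr⟩
      rw [hatoms] at ha hb
      rw [hparties] at hq'
      rw [hres] at hrr
      by_cases hcase : (a, q', rr) = (n, p, r)
      · have h1 : a = n := congrArg Prod.fst hcase
        have h2 : q' = p := congrArg (fun x => x.2.1) hcase
        have h3 : rr = r := congrArg (fun x => x.2.2) hcase
        subst h1; subst h2; subst h3
        rw [htrnpr] at hbtr
        exact Relation.TransGen.single
          ⟨ha, hb, q', hq', rr, hrr, Finset.erase_subset _ _ hbtr⟩
      · rw [htrother a q' rr hcase] at hbtr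
        exact Relation.TransGen.single ⟨ha, hb, q', hq', rr, hrr, hbtr⟩
  · -- Shortcut rule
    obtain ⟨n, r, n', f, hn, hn', hr, hn'n, hUE, hcase, hinj, hfresh, hn0,
      hparties, hresn, hresm, htrf, htrf2, htrold, htrm, hatomsE, hatomsNE,
      hnfE, hnfNE⟩ := h
    obtain ⟨p0, hp0⟩ := N1.parties_nonempty n' hn'
    have hp0n : p0 ∈ N1.parties n := hUE.1 hp0
    have hnnf : n ≠ N1.nf := by
      intro hh
      have := (N1.trans_empty_iff n hn p0 hp0n r hr).mpr hh
      rw [hUE.2 p0 hp0] at this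
      exact absurd this (Finset.singleton_ne_empty _)
    have hsub : N2.atoms ⊆ N1.atoms := by
      by_cases hexcl : N1.ExclusiveAccess n r n'
      · rw [hatomsE hexcl]; exact Finset.erase_subset _ _
      · rw [hatomsNE hexcl]
    have hedgenn' : N1.Edge n n' := by
      refine ⟨hn, hn', p0, hp0n, r, hr, ?_⟩
      rw [hUE.2 p0 hp0]; exact Finset.mem_singleton_self _
    constructor
    · intro hdet p m hm hmnf hp rr hrr
      have hm1 : m ∈ N1.atoms := hsub hm
      rw [hparties] at hp
      by_cases hmn : m = n
      · subst hmn
        rw [hresn] at hrr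
        rcases Finset.mem_union.mp hrr with hrr | hrr
        · rw [htrold rr hrr p]
          exact hdet p m hm1 hnnf hp rr (Finset.erase_subset _ _ hrr)
        · obtain ⟨r', hr', hfr⟩ := Finset.mem_image.mp hrr
          subst hfr
          by_cases hpn' : p ∈ N1.parties n'
          · rw [htrf r' hr' p hpn']
            have hn'nf : n' ≠ N1.nf := by
              rcases hcase with h | h | h
              · exact h.1
              · exact h.1
              · exfalso
                exact hmnf (hnfE ⟨h.1, h.2.1⟩).symm
            exact hdet p n' hn' hn'nf hpn' r' hr'
          · rw [htrf2 r' hr' p hp hpn']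
            exact hdet p m hm1 hnnf hp r hr
      · rw [htrm m hmn]
        rw [hresm m hmn] at hrr
        have hmnf1 : m ≠ N1.nf := by
          intro hh
          by_cases hc : n' = N1.nf ∧ N1.ExclusiveAccess n r n'
          · have h1 := hatomsE hc.2
            rw [h1] at hm
            exact (Finset.mem_erase.mp hm).1 (hh.trans hc.1.symm)
          · exact hmnf (hh.trans (hnfNE hc).symm)
        exact hdet p m hm1 hmnf1 hp rr hrr
    · refine acyclic_of_edge_le ?_
      rintro a b ⟨ha, hb, p, hp, rr, hrr, hbtr⟩
      have ha1 : a ∈ N1.atoms := hsub ha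
      have hb1 : b ∈ N1.atoms := hsub hb
      rw [hparties] at hp
      by_cases han : a = n
      · subst han
        rw [hresn] at hrr
        rcases Finset.mem_union.mp hrr with hrr | hrr
        · rw [htrold rr hrr p] at hbtr
          exact Relation.TransGen.single
            ⟨ha1, hb1, p, hp, rr, Finset.erase_subset _ _ hrr, hbtr⟩
        · obtain ⟨r', hr', hfr⟩ := Finset.mem_image.mp hrr
          subst hfr
          by_cases hpn' : p ∈ N1.parties n'
          · rw [htrf r' hr' p hpn'] at hbtr
            exact Relation.TransGen.head hedgenn'
              (Relation.TransGen.single ⟨hn', hb1, p, hpn', r', hr', hbtr⟩)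
          · rw [htrf2 r' hr' p hp hpn'] at hbtr
            exact Relation.TransGen.single ⟨ha1, hb1, p, hp, r, hr, hbtr⟩
      · rw [htrm a han] at hbtr
        rw [hresm a han] at hrr
        exact Relation.TransGen.single ⟨ha1, hb1, p, hp, rr, hrr, hbtr⟩

end Negotiation
end

section
/- Every maximal reduction sequence of an acyclic negotiation with K atoms and L outcomes consisting only of applications of the merge and d-shortcut rules has length at most K·L. -/
universe u v w

/-!
Each outcome `(n, r)` is weighted by the length of a longest `(n, r)`-sequence, which in an
acyclic negotiation is at most the number `K` of atoms because an occurrence sequence never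
repeats an atom; so the total weight is at most `K · L`. Both rules are simulated by the
negotiation they are applied to: every occurrence sequence of the reduced negotiation becomes
one of the original after replacing the new outcome `o` by a fixed sequence starting at `o.1`
(the merged result by one of the two old ones; for the d-shortcut `(n, r'_s)` by
`(n, r) (n', r')`). Hence no weight grows, acyclicity is preserved, and the outcome that
disappears (merge) or the one that is lengthened by one step (d-shortcut) makes the total
weight drop strictly.
-/

theorem le_of_measure_descent {α : Type*} {P : α → Prop} {μ : α → ℕ} {g : ℕ → α} {m : ℕ}
    (h0 : P (g 0)) (hstep : ∀ i < m, P (g i) → P (g (i + 1)) ∧ μ (g (i + 1)) < μ (g i)) :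
    m ≤ μ (g 0) := by
  suffices ∀ i ≤ m, P (g i) ∧ i + μ (g i) ≤ μ (g 0) by have := (this m le_rfl).2; omega
  intro i
  induction i with
  | zero => exact fun _ => ⟨h0, by omega⟩
  | succ i ih =>
    intro hi
    obtain ⟨hP, hμ⟩ := ih (by omega)
    obtain ⟨hP', hlt⟩ := hstep i (by omega) hP
    exact ⟨hP', by omega⟩

namespace Negotiation

variable {Agent : Type u} {Atom : Type v} {Res : Type w}
variable [Fintype Agent] [DecidableEq Agent] [DecidableEq Atom] [DecidableEq Res]

section Occurrence

variable {N : Negotiation Agent Atom Res}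

theorem Seq.exists_of_append {x y : Marking Agent Atom} {σ τ : List (Atom × Res)}
    (h : N.Seq x (σ ++ τ) y) : ∃ z, N.Seq x σ z ∧ N.Seq z τ y := by
  induction σ generalizing x with
  | nil => exact ⟨x, .nil x, h⟩
  | cons o σ ih =>
    cases h with
    | cons hst hs =>
      obtain ⟨z, h1, h2⟩ := ih hs
      exact ⟨z, .cons hst h1, h2⟩

theorem Seq.append_s9 {x y z : Marking Agent Atom} {σ τ : List (Atom × Res)} (h1 : N.Seq x σ z)
    (h2 : N.Seq z τ y) : N.Seq x (σ ++ τ) y := by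
  induction h1 with
  | nil => exact h2
  | cons hst _ ih => exact .cons hst (ih h2)

theorem Seq.mem_atoms {x y : Marking Agent Atom} {σ : List (Atom × Res)} (h : N.Seq x σ y)
    {o : Atom × Res} (ho : o ∈ σ) : o.1 ∈ N.atoms := by
  induction h with
  | nil => simp at ho
  | cons hst _ ih =>
    rcases List.mem_cons.1 ho with rfl | ho
    · exact hst.1.1
    · exact ih ho

theorem StepTo.edge {x z : Marking Agent Atom} {a c : Atom} {t : Res} {p : Agent}
    (h : N.StepTo x (a, t) z) (hp : p ∈ N.parties a) (hc : c ∈ z p) : N.Edge a c := by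
  rw [h.2.2 p, if_pos hp] at hc
  exact ⟨h.1.1, N.trans_sub a h.1.1 p hp t h.2.1 hc, p, hp, t, h.2.1, hc⟩

theorem Seq.reflTransGen_edge {x y : Marking Agent Atom} {σ : List (Atom × Res)}
    (h : N.Seq x σ y) {p : Agent} {b : Atom} (hb : b ∈ y p) :
    ∃ c ∈ x p, Relation.ReflTransGen N.Edge c b := by
  induction h with
  | nil => exact ⟨b, hb, .refl⟩
  | @cons x z y o σ hst _ ih =>
    obtain ⟨c, hc, hcb⟩ := ih hb
    by_cases hp : p ∈ N.parties o.1
    · exact ⟨o.1, hst.1.2 p hp, .head (hst.edge hp hc) hcb⟩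
    · rw [hst.2.2 p, if_neg hp] at hc
      exact ⟨c, hc, hcb⟩

theorem Seq.transGen_edge {x y : Marking Agent Atom} {a b : Atom} {t : Res}
    {σ : List (Atom × Res)} (h : N.Seq x ((a, t) :: σ) y) {p : Agent} (hp : p ∈ N.parties a)
    (hb : b ∈ y p) : Relation.TransGen N.Edge a b := by
  cases h with
  | cons hst hs =>
    obtain ⟨c, hc, hcb⟩ := hs.reflTransGen_edge hb
    exact .head' (hst.edge hp hc) hcb

theorem Seq.nodup_map_fst (hacyc : N.Acyclic) {x y : Marking Agent Atom}
    {σ : List (Atom × Res)} (h : N.Seq x σ y) : (σ.map Prod.fst).Nodup := by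
  induction h with
  | nil => exact List.nodup_nil
  | @cons x z y o σ hst hs ih =>
    obtain ⟨a, t⟩ := o
    refine List.nodup_cons.2 ⟨fun hmem => ?_, ih⟩
    obtain ⟨⟨a', s⟩, hmem', ha'⟩ := List.mem_map.1 hmem
    obtain rfl : a = a' := ha'.symm
    obtain ⟨σ1, σ2, rfl⟩ := List.append_of_mem hmem'
    obtain ⟨w, hzw, hw⟩ := hs.exists_of_append
    obtain ⟨p, hp⟩ := N.parties_nonempty a hst.1.1
    cases hw with
    | cons hst' _ =>
      exact hacyc a ((Seq.cons hst hzw).transGen_edge hp (hst'.1.2 p hp))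

theorem NRSeq.length_le_card (hacyc : N.Acyclic) {n : Atom} {r : Res}
    {σ : List (Atom × Res)} (h : N.NRSeq n r σ) : σ.length ≤ N.atoms.card := by
  obtain ⟨-, ⟨y, hseq⟩, -⟩ := h
  have hsub : (σ.map Prod.fst).toFinset ⊆ N.atoms := by
    intro a ha
    obtain ⟨o, ho, rfl⟩ := List.mem_map.1 (List.mem_toFinset.1 ha)
    exact hseq.mem_atoms ho
  calc σ.length = (σ.map Prod.fst).toFinset.card := by
        rw [List.toFinset_card_of_nodup (hseq.nodup_map_fst hacyc), List.length_map]
    _ ≤ N.atoms.card := Finset.card_le_card hsub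

theorem nrSeq_singleton {n : Atom} {r : Res} (hn : n ∈ N.atoms) (hr : r ∈ N.results n) :
    N.NRSeq n r [(n, r)] := by
  refine ⟨⟨[], rfl⟩, ⟨_, .cons ⟨⟨hn, fun p hp => ?_⟩, hr, fun p => rfl⟩ (.nil _)⟩, ?_⟩
  · simp [xAt, hp]
  · simp

end Occurrence

section Potential

/-- Equal to `outcomeIndex n r + 1` for an outcome of `N`. Weighting outcomes by it rather than
by their index makes merging, which deletes an outcome of possibly zero index, strictly decrease
the potential. -/
noncomputable def maxNRSeqLength (N : Negotiation Agent Atom Res) (n : Atom) (r : Res) : ℕ :=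
  sSup {l : ℕ | ∃ σ, N.NRSeq n r σ ∧ σ.length = l}

noncomputable def atomPotential (N : Negotiation Agent Atom Res) (n : Atom) : ℕ :=
  ∑ r ∈ N.results n, N.maxNRSeqLength n r

noncomputable def potential (N : Negotiation Agent Atom Res) : ℕ :=
  ∑ n ∈ N.atoms, N.atomPotential n

variable {N : Negotiation Agent Atom Res}

theorem bddAbove_nrSeq_lengths (hacyc : N.Acyclic) (n : Atom) (r : Res) :
    BddAbove {l : ℕ | ∃ σ, N.NRSeq n r σ ∧ σ.length = l} :=
  ⟨N.atoms.card, by rintro l ⟨σ, hσ, rfl⟩; exact hσ.length_le_card hacyc⟩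

theorem maxNRSeqLength_le_card (hacyc : N.Acyclic) (n : Atom) (r : Res) :
    N.maxNRSeqLength n r ≤ N.atoms.card :=
  csSup_le' fun _ ⟨_, hσ, hl⟩ => hl ▸ hσ.length_le_card hacyc

theorem one_le_maxNRSeqLength (hacyc : N.Acyclic) {n : Atom} {r : Res} (hn : n ∈ N.atoms)
    (hr : r ∈ N.results n) : 1 ≤ N.maxNRSeqLength n r :=
  le_csSup (bddAbove_nrSeq_lengths hacyc n r) ⟨_, nrSeq_singleton hn hr, rfl⟩

theorem potential_le (hacyc : N.Acyclic) :
    N.potential ≤ N.atoms.card * ∑ n ∈ N.atoms, (N.results n).card := by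
  rw [Finset.mul_sum]
  refine Finset.sum_le_sum fun n _ => ?_
  calc N.atomPotential n ≤ ∑ _r ∈ N.results n, N.atoms.card :=
        Finset.sum_le_sum fun r _ => maxNRSeqLength_le_card hacyc n r
    _ = N.atoms.card * (N.results n).card := by rw [Finset.sum_const, smul_eq_mul, mul_comm]

theorem potential_lt_potential {N1 N2 : Negotiation Agent Atom Res} {n : Atom}
    (hatoms : N2.atoms ⊆ N1.atoms) (hn : n ∈ N2.atoms)
    (hresults : ∀ a ≠ n, N2.results a = N1.results a)
    (hle : ∀ a ≠ n, ∀ s, N2.maxNRSeqLength a s ≤ N1.maxNRSeqLength a s)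
    (hlt : N2.atomPotential n < N1.atomPotential n) : N2.potential < N1.potential := by
  have hle' : ∀ a ∈ N2.atoms, N2.atomPotential a ≤ N1.atomPotential a := by
    intro a _
    by_cases han : a = n
    · exact han ▸ hlt.le
    · rw [atomPotential, hresults a han]
      exact Finset.sum_le_sum fun s _ => hle a han s
  calc N2.potential < ∑ a ∈ N2.atoms, N1.atomPotential a :=
        Finset.sum_lt_sum hle' ⟨n, hn, hlt⟩
    _ ≤ N1.potential := Finset.sum_le_sum_of_subset hatoms

end Potential

section Simulation

def substOutcome (o : Atom × Res) (u σ : List (Atom × Res)) : List (Atom × Res) :=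
  σ.flatMap fun o' => if o' = o then u else [o']

section substOutcome

variable (o : Atom × Res) (u : List (Atom × Res))

theorem substOutcome_cons (o' : Atom × Res) (σ : List (Atom × Res)) :
    substOutcome o u (o' :: σ) = (if o' = o then u else [o']) ++ substOutcome o u σ :=
  List.flatMap_cons

theorem length_le_length_substOutcome (hu : u ≠ []) (σ : List (Atom × Res)) :
    σ.length ≤ (substOutcome o u σ).length := by
  induction σ with
  | nil => rfl
  | cons o' σ ih =>
    have : 1 ≤ (if o' = o then u else [o']).length := by
      split
      · exact List.length_pos_of_ne_nil hu
      · rfl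
    rw [substOutcome_cons, List.length_append, List.length_cons]
    omega

theorem mem_substOutcome {σ : List (Atom × Res)} {o' : Atom × Res}
    (h : o' ∈ substOutcome o u σ) : o' ∈ σ ∨ (o ∈ σ ∧ o' ∈ u) := by
  obtain ⟨o'', ho'', hmem⟩ := List.mem_flatMap.1 h
  split at hmem
  · subst o''
    exact .inr ⟨ho'', hmem⟩
  · exact .inl (List.mem_singleton.1 hmem ▸ ho'')

end substOutcome

/-- `N1` replays every step of `N2`, the outcome `o` by the sequence `(o.1, t) :: τ`. The
replacement starts at the same atom, so that `(o.1, o.2)`-sequences of `N2` become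
`(o.1, t)`-sequences of `N1`. -/
structure Simulates (N1 N2 : Negotiation Agent Atom Res) (o : Atom × Res) (t : Res)
    (τ : List (Atom × Res)) : Prop where
  parties_eq : N2.parties = N1.parties
  stepTo_of_ne : ∀ {x y o'}, o' ≠ o → N2.StepTo x o' y → N1.StepTo x o' y
  seq_of_stepTo : ∀ {x y}, N2.StepTo x o y → N1.Seq x ((o.1, t) :: τ) y
  parties_subset : ∀ o' ∈ τ, N1.parties o'.1 ⊆ N1.parties o.1

namespace Simulates

variable {N1 N2 : Negotiation Agent Atom Res} {o : Atom × Res} {t : Res}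
  {τ : List (Atom × Res)}

theorem seq (h : Simulates N1 N2 o t τ) {x y : Marking Agent Atom} {σ : List (Atom × Res)}
    (hσ : N2.Seq x σ y) : N1.Seq x (substOutcome o ((o.1, t) :: τ) σ) y := by
  induction hσ with
  | nil => exact .nil _
  | @cons x z y o' σ hst _ ih =>
    rw [substOutcome_cons]
    split
    · exact (h.seq_of_stepTo (‹o' = o› ▸ hst)).append_s9 ih
    · exact .cons (h.stepTo_of_ne ‹_› hst) ih

theorem xAt_eq (h : Simulates N1 N2 o t τ) (a : Atom) : N2.xAt a = N1.xAt a := by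
  unfold xAt
  rw [h.parties_eq]

theorem nrSeq (h : Simulates N1 N2 o t τ) {a : Atom} {s s' : Res} {σ : List (Atom × Res)}
    (hσ : N2.NRSeq a s σ) (hhead : ∃ ρ, substOutcome o ((o.1, t) :: τ) σ = (a, s') :: ρ) :
    N1.NRSeq a s' (substOutcome o ((o.1, t) :: τ) σ) := by
  obtain ⟨-, ⟨y, hseq⟩, hpar⟩ := hσ
  refine ⟨hhead, ⟨y, h.xAt_eq a ▸ h.seq hseq⟩, fun o' ho' => ?_⟩
  rw [← h.parties_eq]
  rcases mem_substOutcome _ _ ho' with ho' | ⟨ho, ho'⟩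
  · exact hpar o' ho'
  · have hoa := hpar o ho
    rcases List.mem_cons.1 ho' with rfl | ho'
    · exact hoa
    · exact (h.parties_eq ▸ h.parties_subset o' ho').trans hoa

theorem nrSeq_of_ne (h : Simulates N1 N2 o t τ) {a : Atom} {s : Res} {σ : List (Atom × Res)}
    (hσ : N2.NRSeq a s σ) (hne : (a, s) ≠ o) :
    N1.NRSeq a s (substOutcome o ((o.1, t) :: τ) σ) := by
  refine h.nrSeq hσ ?_
  obtain ⟨ρ, rfl⟩ := hσ.1
  exact ⟨_, by rw [substOutcome_cons, if_neg hne, List.singleton_append]⟩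

theorem nrSeq_self (h : Simulates N1 N2 o t τ) {σ : List (Atom × Res)}
    (hσ : N2.NRSeq o.1 o.2 σ) :
    N1.NRSeq o.1 t (substOutcome o ((o.1, t) :: τ) σ) ∧
      σ.length + τ.length ≤ (substOutcome o ((o.1, t) :: τ) σ).length := by
  obtain ⟨ρ, rfl⟩ := hσ.1
  have hsubst : substOutcome o ((o.1, t) :: τ) ((o.1, o.2) :: ρ) =
      (o.1, t) :: (τ ++ substOutcome o ((o.1, t) :: τ) ρ) := by
    rw [substOutcome_cons, if_pos rfl, List.cons_append]
  refine ⟨h.nrSeq hσ ⟨_, hsubst⟩, ?_⟩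
  have := length_le_length_substOutcome o ((o.1, t) :: τ) (List.cons_ne_nil _ _) ρ
  rw [hsubst]
  simp only [List.length_cons, List.length_append]
  omega

theorem maxNRSeqLength_le (h : Simulates N1 N2 o t τ) (hacyc : N1.Acyclic) {a : Atom}
    {s : Res} (hne : (a, s) ≠ o) : N2.maxNRSeqLength a s ≤ N1.maxNRSeqLength a s :=
  csSup_le' fun _ ⟨σ, hσ, hl⟩ => hl ▸
    (length_le_length_substOutcome o ((o.1, t) :: τ) (List.cons_ne_nil _ _) σ).trans
      (le_csSup (bddAbove_nrSeq_lengths hacyc a s) ⟨_, h.nrSeq_of_ne hσ hne, rfl⟩)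

theorem maxNRSeqLength_add_length_le (h : Simulates N1 N2 o t τ) (hacyc : N1.Acyclic)
    (ho1 : o.1 ∈ N2.atoms) (ho2 : o.2 ∈ N2.results o.1) :
    N2.maxNRSeqLength o.1 o.2 + τ.length ≤ N1.maxNRSeqLength o.1 t := by
  have hlen : ∀ σ, N2.NRSeq o.1 o.2 σ → σ.length + τ.length ≤ N1.maxNRSeqLength o.1 t :=
    fun σ hσ =>
      have ⟨hσ', hσlen⟩ := h.nrSeq_self hσ
      hσlen.trans (le_csSup (bddAbove_nrSeq_lengths hacyc _ _) ⟨_, hσ', rfl⟩)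
  have hsingleton := hlen _ (nrSeq_singleton ho1 ho2)
  have : N2.maxNRSeqLength o.1 o.2 ≤ N1.maxNRSeqLength o.1 t - τ.length :=
    csSup_le' fun _ ⟨σ, hσ, hl⟩ => by have := hlen σ hσ; omega
  omega

theorem edge (h : Simulates N1 N2 o t τ) {a b : Atom} (hab : N2.Edge a b) :
    Relation.TransGen N1.Edge a b := by
  obtain ⟨ha, -, p, hp, s, hs, hb⟩ := hab
  have hst : N2.StepTo (N2.xAt a) (a, s)
      (fun q => if q ∈ N2.parties a then N2.trans a q s else N2.xAt a q) :=
    ⟨⟨ha, fun q hq => by simp [xAt, hq]⟩, hs, fun q => rfl⟩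
  -- replaying this step of `N2` from `x_a` in `N1` starts with an outcome of `a`
  have hseq := h.xAt_eq a ▸ h.seq (.cons hst (.nil _))
  obtain ⟨t', ρ, hρ⟩ : ∃ t' ρ, substOutcome o ((o.1, t) :: τ) [(a, s)] = (a, t') :: ρ := by
    rw [substOutcome_cons]
    split
    · subst o; exact ⟨t, _, rfl⟩
    · exact ⟨s, _, rfl⟩
  rw [hρ] at hseq
  exact hseq.transGen_edge (h.parties_eq ▸ hp) (by simpa [hp] using hb)

theorem acyclic (h : Simulates N1 N2 o t τ) (hacyc : N1.Acyclic) : N2.Acyclic :=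
  fun a hc => hacyc a (Relation.TransGen.closed (fun _ _ => h.edge) a a hc)

end Simulates

end Simulation

theorem StepTo.of_trans_eq {N1 N2 : Negotiation Agent Atom Res}
    (hparties : N2.parties = N1.parties) {x y : Marking Agent Atom} {a : Atom} {s t : Res}
    (h : N2.StepTo x (a, s) y) (ha : a ∈ N1.atoms) (ht : t ∈ N1.results a)
    (htrans : ∀ p ∈ N1.parties a, N2.trans a p s = N1.trans a p t) : N1.StepTo x (a, t) y := by
  refine ⟨⟨ha, fun p hp => h.1.2 p (hparties ▸ hp)⟩, ht, fun p => ?_⟩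
  rw [h.2.2 p, hparties]
  split_ifs with hp
  · exact htrans p hp
  · rfl

section Merge

def MergeRuleAt (N1 N2 : Negotiation Agent Atom Res) (n : Atom) (r1 r2 r : Res) : Prop :=
  n ∈ N1.atoms ∧ n ≠ N1.nf ∧
    r1 ∈ N1.results n ∧ r2 ∈ N1.results n ∧ r1 ≠ r2 ∧
    (∀ p ∈ N1.parties n, N1.trans n p r1 = N1.trans n p r2) ∧
    r ∉ N1.results n ∧
    N2.atoms = N1.atoms ∧ N2.n0 = N1.n0 ∧ N2.nf = N1.nf ∧ N2.parties = N1.parties ∧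
    N2.results n = insert r (((N1.results n).erase r1).erase r2) ∧
    (∀ m, m ≠ n → N2.results m = N1.results m) ∧
    (∀ p, N2.trans n p r = N1.trans n p r1) ∧
    (∀ p, ∀ r'' ∈ ((N1.results n).erase r1).erase r2, N2.trans n p r'' = N1.trans n p r'') ∧
    (∀ m, m ≠ n → N2.trans m = N1.trans m)

variable {N1 N2 : Negotiation Agent Atom Res} {n : Atom} {r1 r2 r : Res}

theorem mergeRule_iff : MergeRule N1 N2 ↔ ∃ n r1 r2 r, MergeRuleAt N1 N2 n r1 r2 r := Iff.rfl

theorem MergeRuleAt.simulates (h : MergeRuleAt N1 N2 n r1 r2 r) :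
    Simulates N1 N2 (n, r) r1 [] := by
  obtain ⟨hn, -, hr1, -, -, -, -, hatoms, -, -, hparties, hresn, hresm, htr, htr2, htrm⟩ := h
  refine ⟨hparties, fun {x y o} hne hst => ?_, fun hst => .cons
    (hst.of_trans_eq hparties hn hr1 fun p _ => htr p) (.nil _), by simp⟩
  obtain ⟨a, s⟩ := o
  have ha : a ∈ N1.atoms := hatoms ▸ hst.1.1
  have hs : s ∈ N2.results a := hst.2.1
  by_cases han : a = n
  · subst a
    rw [hresn, Finset.mem_insert] at hs
    have hsS := hs.resolve_left fun hsr => hne (hsr ▸ rfl)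
    exact hst.of_trans_eq hparties ha (Finset.mem_of_mem_erase (Finset.mem_of_mem_erase hsS))
      fun p _ => htr2 p s hsS
  · exact hst.of_trans_eq hparties ha (hresm a han ▸ hs) fun p _ => by rw [htrm a han]

theorem MergeRuleAt.potential_lt (hacyc : N1.Acyclic) (h : MergeRuleAt N1 N2 n r1 r2 r) :
    N2.potential < N1.potential := by
  have hsim := h.simulates
  obtain ⟨hn, -, hr1, hr2, hne, -, hfresh, hatoms, -, -, -, hresn, hresm, -⟩ := h
  set S := ((N1.results n).erase r1).erase r2
  have hrS : r ∉ S := fun hrS => hfresh (Finset.mem_of_mem_erase (Finset.mem_of_mem_erase hrS))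
  refine potential_lt_potential hatoms.subset (hatoms ▸ hn) hresm
    (fun a han s => hsim.maxNRSeqLength_le hacyc fun has => han (congrArg Prod.fst has)) ?_
  have hmerged := hsim.maxNRSeqLength_add_length_le hacyc (hatoms ▸ hn)
    (hresn ▸ Finset.mem_insert_self r S)
  have hrest : ∑ s ∈ S, N2.maxNRSeqLength n s ≤ ∑ s ∈ S, N1.maxNRSeqLength n s :=
    Finset.sum_le_sum fun s hs =>
      hsim.maxNRSeqLength_le hacyc fun hsr => hrS ((Prod.mk.inj hsr).2 ▸ hs)
  have hsplit : N1.atomPotential n =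
      N1.maxNRSeqLength n r1 + (N1.maxNRSeqLength n r2 + ∑ s ∈ S, N1.maxNRSeqLength n s) := by
    rw [Finset.add_sum_erase _ _ (Finset.mem_erase.2 ⟨hne.symm, hr2⟩),
      Finset.add_sum_erase _ _ hr1, atomPotential]
  have hpos := one_le_maxNRSeqLength hacyc hn hr2
  rw [atomPotential, hresn, Finset.sum_insert hrS]
  simp only [List.length_nil, add_zero] at hmerged
  omega

end Merge

section Shortcut

variable {N1 N2 : Negotiation Agent Atom Res} {n n' : Atom} {r r' : Res} {f : Res → Res}

theorem ShortcutRuleAt.atoms_subset_s9 (h : ShortcutRuleAt N1 N2 n r n' f) :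
    N2.atoms ⊆ N1.atoms := by
  obtain ⟨-, -, -, -, -, -, -, -, -, -, -, -, -, -, -, -, hexcl, hnexcl, -⟩ := h
  by_cases hex : N1.ExclusiveAccess n r n'
  · exact hexcl hex ▸ Finset.erase_subset _ _
  · exact (hnexcl hex).subset

theorem ShortcutRuleAt.mem_atoms (h : ShortcutRuleAt N1 N2 n r n' f) : n ∈ N2.atoms := by
  obtain ⟨hn, -, -, hne, -, -, -, -, -, -, -, -, -, -, -, -, hexcl, hnexcl, -⟩ := h
  by_cases hex : N1.ExclusiveAccess n r n'
  · exact hexcl hex ▸ Finset.mem_erase.2 ⟨hne.symm, hn⟩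
  · exact hnexcl hex ▸ hn

theorem ShortcutRuleAt.results_eq (h : ShortcutRuleAt N1 N2 n r n' f)
    (hr' : N1.results n' = {r'}) : N2.results n = insert (f r') ((N1.results n).erase r) := by
  obtain ⟨-, -, -, -, -, -, -, -, -, -, hresn, -⟩ := h
  rw [hresn, hr', Finset.image_singleton, Finset.union_comm, Finset.insert_eq]

theorem ShortcutRuleAt.seq_of_stepTo (h : ShortcutRuleAt N1 N2 n r n' f)
    (hr' : N1.results n' = {r'}) {x y : Marking Agent Atom} (hst : N2.StepTo x (n, f r') y) :
    N1.Seq x [(n, r), (n', r')] y := by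
  obtain ⟨hn, hn', hr, -, ⟨hsub, hto⟩, -, -, -, -, hparties, -, -, htrans1, htrans2, -⟩ := h
  have hr'mem : r' ∈ N1.results n' := hr' ▸ Finset.mem_singleton_self r'
  have henabled : ∀ p ∈ N1.parties n, n ∈ x p := fun p hp => hst.1.2 p (hparties ▸ hp)
  refine .cons (y := fun p => if p ∈ N1.parties n then N1.trans n p r else x p)
    ⟨⟨hn, henabled⟩, hr, fun p => rfl⟩ (.cons ⟨⟨hn', fun p hp => ?_⟩, hr'mem, fun p => ?_⟩ (.nil y))
  · simp [hsub hp, hto p hp]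
  · rw [hst.2.2 p, hparties]
    by_cases hp' : p ∈ N1.parties n'
    · simp only [if_pos hp', if_pos (hsub hp'), htrans1 r' hr'mem p hp']
    · by_cases hp : p ∈ N1.parties n
      · simp only [if_neg hp', if_pos hp, htrans2 r' hr'mem p hp hp']
      · simp only [if_neg hp', if_neg hp]

theorem ShortcutRuleAt.simulates (h : ShortcutRuleAt N1 N2 n r n' f)
    (hr' : N1.results n' = {r'}) : Simulates N1 N2 (n, f r') r [(n', r')] := by
  have hatoms := h.atoms_subset_s9
  have hresn := h.results_eq hr'
  have hseq : ∀ {x y}, N2.StepTo x (n, f r') y → N1.Seq x [(n, r), (n', r')] y :=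
    h.seq_of_stepTo hr'
  obtain ⟨-, -, -, -, ⟨hsub, -⟩, -, -, -, -, hparties, -, hresm, -, -, htrans3, htransm, -⟩ := h
  refine ⟨hparties, fun {x y o} hne hst => ?_, hseq, by simpa using hsub⟩
  obtain ⟨a, s⟩ := o
  have ha : a ∈ N1.atoms := hatoms hst.1.1
  have hs : s ∈ N2.results a := hst.2.1
  by_cases han : a = n
  · subst a
    rw [hresn, Finset.mem_insert] at hs
    have hs' := hs.resolve_left fun hsr => hne (hsr ▸ rfl)
    exact hst.of_trans_eq hparties ha (Finset.mem_of_mem_erase hs') fun p _ => htrans3 s hs' p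
  · exact hst.of_trans_eq hparties ha (hresm a han ▸ hs) fun p _ => by rw [htransm a han]

theorem ShortcutRuleAt.potential_lt (hacyc : N1.Acyclic) (h : ShortcutRuleAt N1 N2 n r n' f)
    (hr' : N1.results n' = {r'}) : N2.potential < N1.potential := by
  have hsim := h.simulates hr'
  have hn2 := h.mem_atoms
  have hresn := h.results_eq hr'
  have hatoms := h.atoms_subset_s9
  obtain ⟨hn, -, hr, -, -, -, -, hfresh, -, -, -, hresm, -⟩ := h
  have hfr : f r' ∉ (N1.results n).erase r := fun hfr =>
    hfresh r' (hr' ▸ Finset.mem_singleton_self r') (Finset.mem_of_mem_erase hfr)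
  refine potential_lt_potential hatoms hn2 hresm
    (fun a han s => hsim.maxNRSeqLength_le hacyc fun has => han (congrArg Prod.fst has)) ?_
  have hshortcut :=
    hsim.maxNRSeqLength_add_length_le hacyc hn2 (hresn ▸ Finset.mem_insert_self _ _)
  have hrest : ∑ s ∈ (N1.results n).erase r, N2.maxNRSeqLength n s ≤
      ∑ s ∈ (N1.results n).erase r, N1.maxNRSeqLength n s :=
    Finset.sum_le_sum fun s hs =>
      hsim.maxNRSeqLength_le hacyc fun hsf => hfr ((Prod.mk.inj hsf).2 ▸ hs)
  rw [atomPotential, atomPotential, hresn, Finset.sum_insert hfr,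
    ← Finset.add_sum_erase _ _ hr]
  simp only [List.length_singleton] at hshortcut
  omega

theorem DShortcutRule.exists_shortcutRuleAt (h : DShortcutRule N1 N2) :
    ∃ n r n' f r', ShortcutRuleAt N1 N2 n r n' f ∧ N1.results n' = {r'} := by
  obtain ⟨n, r, n', f, h, hcard⟩ := h
  obtain ⟨r', hr'⟩ := Finset.card_eq_one.1
    (hcard.antisymm (Finset.card_pos.2 (N1.results_nonempty n' h.2.1)))
  exact ⟨n, r, n', f, r', h, hr'⟩

end Shortcut

theorem acyclic_and_potential_lt {N1 N2 : Negotiation Agent Atom Res} (hacyc : N1.Acyclic)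
    (h : MergeRule N1 N2 ∨ DShortcutRule N1 N2) : N2.Acyclic ∧ N2.potential < N1.potential := by
  rcases h with h | h
  · obtain ⟨n, r1, r2, r, h⟩ := mergeRule_iff.1 h
    exact ⟨h.simulates.acyclic hacyc, h.potential_lt hacyc⟩
  · obtain ⟨n, r, n', f, r', h, hr'⟩ := h.exists_shortcutRuleAt
    exact ⟨(h.simulates hr').acyclic hacyc, h.potential_lt hacyc hr'⟩

/-- Every reduction sequence of an acyclic negotiation with `K` atoms and `L` outcomes
consisting only of applications of the merge and d-shortcut rules has length at most
`K · L`. -/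
theorem statement9 (N : Negotiation Agent Atom Res) (hacyc : N.Acyclic)
    (g : ℕ → Negotiation Agent Atom Res) (m : ℕ) (h0 : g 0 = N)
    (hstep : ∀ i < m, MergeRule (g i) (g (i + 1)) ∨ DShortcutRule (g i) (g (i + 1))) :
    m ≤ N.atoms.card * N.atoms.sum (fun n => (N.results n).card) := by
  subst h0
  calc m ≤ (g 0).potential :=
        le_of_measure_descent (P := Acyclic) hacyc fun i hi hac =>
          acyclic_and_potential_lt hac (hstep i hi)
    _ ≤ _ := potential_le hacyc

end Negotiation
end

section
/- Let σ be a loop of a negotiation, let (n,r) be an outcome appearing in σ, and let x1 →(n,r) x2 be any step. For every agent p: if x1(p) intersects the set N_σ of atoms appearing in σ, then x2(p) intersects N_σ. -/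
universe u v w

namespace Negotiation
variable {Agent : Type u} {Atom : Type v} {Res : Type w}
variable [Fintype Agent] [DecidableEq Agent] [DecidableEq Atom] [DecidableEq Res]

theorem seq_append_aux {N : Negotiation Agent Atom Res} {x y z : Marking Agent Atom}
    {τ1 τ2 : List (Atom × Res)} (h1 : N.Seq x τ1 y) (h2 : N.Seq y τ2 z) :
    N.Seq x (τ1 ++ τ2) z := by
  induction h1 with
  | nil _ => simpa using h2
  | cons hs _ ih => exact Seq.cons hs (ih h2)

theorem seq_split_aux {N : Negotiation Agent Atom Res} {x z : Marking Agent Atom}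
    {τ : List (Atom × Res)} (h : N.Seq x τ z) {o : Atom × Res} (ho : o ∈ τ) :
    ∃ τ1 τ2 y1 y2, τ = τ1 ++ o :: τ2 ∧ N.StepTo y1 o y2 ∧ N.Seq y2 τ2 z := by
  induction h with
  | nil _ => simp at ho
  | @cons x y z o' τ' hs hseq ih =>
    rcases List.mem_cons.mp ho with rfl | ho'
    · exact ⟨[], τ', x, y, rfl, hs, hseq⟩
    · obtain ⟨τ1, τ2, y1, y2, heq, hstep, hseq2⟩ := ih ho'
      exact ⟨o' :: τ1, τ2, y1, y2, by rw [heq]; rfl, hstep, hseq2⟩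

theorem seq_key_aux {N : Negotiation Agent Atom Res} {y z : Marking Agent Atom}
    {τ : List (Atom × Res)} (h : N.Seq y τ z) {o : Atom × Res} (ho : o ∈ τ)
    {p : Agent} (hp : p ∈ N.parties o.1) :
    ∃ m ∈ y p, m ∈ τ.map Prod.fst := by
  induction h with
  | nil _ => simp at ho
  | @cons x y' z o' τ' hs hseq ih =>
    by_cases hp' : p ∈ N.parties o'.1
    · exact ⟨o'.1, (hs.1.2 p hp'), by simp⟩
    · have ho' : o ∈ τ' := by
        rcases List.mem_cons.mp ho with rfl | ho'
        · exact absurd hp hp'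
        · exact ho'
      obtain ⟨m, hm1, hm2⟩ := ih ho'
      have : y' p = x p := by rw [hs.2.2 p, if_neg hp']
      exact ⟨m, by rwa [this] at hm1, by simp [hm2]⟩

/-- Let `σ` be a loop, `(n,r)` an outcome appearing in `σ`, and `x1 →(n,r) x2` any step.
If `x1 p` intersects the atoms of `σ`, then so does `x2 p`. -/
theorem statement14 (N : Negotiation Agent Atom Res) (σ : List (Atom × Res))
    (x : Marking Agent Atom) (hloop : N.Seq x σ x) (hne : σ ≠ [])
    (n : Atom) (r : Res) (ho : (n, r) ∈ σ)
    (x1 x2 : Marking Agent Atom) (hstep : N.StepTo x1 (n, r) x2) (p : Agent)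
    (h : ∃ m ∈ x1 p, m ∈ σ.map Prod.fst) :
    ∃ m ∈ x2 p, m ∈ σ.map Prod.fst := by
  by_cases hp : p ∈ N.parties n
  · -- x2 p = trans n p r
    have hx2 : x2 p = N.trans n p r := by rw [hstep.2.2 p, if_pos hp]
    obtain ⟨σ1, σ2, y1, y2, heq, hstep', hseq2⟩ := seq_split_aux hloop ho
    have hy2 : y2 p = N.trans n p r := by rw [hstep'.2.2 p, if_pos hp]
    have hseq' : N.Seq y2 (σ2 ++ σ) x := seq_append_aux hseq2 hloop
    have ho' : (n, r) ∈ σ2 ++ σ := List.mem_append_right _ ho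
    obtain ⟨m, hm1, hm2⟩ := seq_key_aux hseq' ho' hp
    refine ⟨m, by rw [hx2, ← hy2]; exact hm1, ?_⟩
    rw [List.map_append, List.mem_append] at hm2
    rcases hm2 with hm2 | hm2
    · rw [heq, List.map_append, List.mem_append]
      right
      simp only [List.map_cons, List.mem_cons]
      right; exact hm2
    · exact hm2
  · have hx2 : x2 p = x1 p := by rw [hstep.2.2 p, if_neg hp]
    rwa [hx2]

end Negotiation
end
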